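/- arXiv:1701.05447 — 9 statements merged into one kernel-verified Lean document; each statement's English description precedes it below -/
import Mathlib

section
/- Let X be a nonnegative random variable on a probability space (Ω, ℱ, ℙ) with distribution function F_X, let g_k be the k-layer stop-loss policy with retention d and thresholds M_1, …, M_k, and let t ∈ ℝ satisfy E[e^{|t|X}] < ∞. Then the moment generating function of the reinsurer's risk portion g_k(X) satisfies E[e^{t·g_k(X)}] = 1 + t·( Σ_{j=0}^{k−1} ∫_{M_j+d}^{M_{j+1}} e^{t(x−(j+1)d)}(1−F_X(x)) dx + ∫_{M_k+d}^{∞} e^{t(x−(k+1)d)}(1−F_X(x)) dx ), where M_0 = 0. -/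
open MeasureTheory ProbabilityTheory

/-- The k-layer stop-loss policy with retention `d` and thresholds `M 1, …, M k`
(with `M 0 = 0`): `g_k(x) = Σ_{j=0}^{k−1} (min(x, M_{j+1}) − M_j − d)_+ + (x − M_k − d)_+`. -/
noncomputable def multiLayer (d : ℝ) (M : ℕ → ℝ) (k : ℕ) (x : ℝ) : ℝ :=
  (∑ j ∈ Finset.range k, max (min x (M (j + 1)) - M j - d) 0) + max (x - M k - d) 0

set_option maxHeartbeats 1000000
section AUX
lemma aux_exp_Ioc (t c : ℝ) {a b : ℝ} (hab : a ≤ b) :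
    ∫ x in Set.Ioc a b, t * Real.exp (t * (x - c)) = Real.exp (t*(b-c)) - Real.exp (t*(a-c)) := by
  rw [← intervalIntegral.integral_of_le hab]
  have : ∀ x ∈ Set.uIcc a b, HasDerivAt (fun x => Real.exp (t * (x - c))) (t * Real.exp (t * (x - c))) x := by
    intro x _
    have h1 : HasDerivAt (fun x : ℝ => t * (x - c)) t x := ((hasDerivAt_id x).sub_const c).const_mul t |>.congr_deriv (by ring)
    simpa [mul_comm] using h1.exp
  exact intervalIntegral.integral_eq_sub_of_hasDerivAt this (by apply Continuous.intervalIntegrable; fun_prop)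


lemma aux_ne_ae (S : Set ℝ) (y : ℝ) : ∀ᵐ x ∂(volume.restrict S), x ≠ y :=
  ae_restrict_of_ae (by
    refine ae_iff.mpr ?_
    have : {x : ℝ | ¬ x ≠ y} = {y} := by ext x; simp
    rw [this]; exact Real.volume_singleton)

lemma aux_ind_Ioi (f : ℝ → ℝ) (c y : ℝ) :
    ∫ x in Set.Ioi c, (Set.Iio y).indicator f x = ∫ x in Set.Ioc c (max c y), f x := by
  have hcong : (Set.Iio y).indicator f =ᵐ[volume.restrict (Set.Ioi c)]
      (Set.Ioc c (max c y)).indicator f := by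
    filter_upwards [aux_ne_ae _ y, ae_restrict_mem measurableSet_Ioi] with x hxy hx
    by_cases h : x < y
    · have h2 : x ∈ Set.Ioc c (max c y) := ⟨hx, le_max_of_le_right h.le⟩
      have h1 : x ∈ Set.Iio y := h
      rw [Set.indicator_of_mem h1, Set.indicator_of_mem h2]
    · have hxy' : y < x := lt_of_le_of_ne (not_lt.mp h) (Ne.symm hxy)
      have h2 : x ∉ Set.Ioc c (max c y) := by
        simp only [Set.mem_Ioc, not_and, not_le]
        exact fun _ => max_lt hx hxy'
      have h1 : x ∉ Set.Iio y := h
      rw [Set.indicator_of_notMem h1, Set.indicator_of_notMem h2]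
  rw [integral_congr_ae hcong, integral_indicator measurableSet_Ioc,
    Measure.restrict_restrict measurableSet_Ioc,
    Set.inter_eq_self_of_subset_left Set.Ioc_subset_Ioi_self]

lemma aux_ind_Ioc (f : ℝ → ℝ) {a b : ℝ} (hab : a ≤ b) (y : ℝ) :
    ∫ x in Set.Ioc a b, (Set.Iio y).indicator f x
      = ∫ x in Set.Ioc a (max a (min b y)), f x := by
  have hcong : (Set.Iio y).indicator f =ᵐ[volume.restrict (Set.Ioc a b)]
      (Set.Ioc a (max a (min b y))).indicator f := by
    filter_upwards [aux_ne_ae _ y, ae_restrict_mem measurableSet_Ioc] with x hxy hx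
    by_cases h : x < y
    · have h2 : x ∈ Set.Ioc a (max a (min b y)) :=
        ⟨hx.1, le_max_of_le_right (le_min hx.2 h.le)⟩
      have h1 : x ∈ Set.Iio y := h
      rw [Set.indicator_of_mem h1, Set.indicator_of_mem h2]
    · have hxy' : y < x := lt_of_le_of_ne (not_lt.mp h) (Ne.symm hxy)
      have h2 : x ∉ Set.Ioc a (max a (min b y)) := by
        simp only [Set.mem_Ioc, not_and, not_le]
        exact fun _ => max_lt hx.1 (lt_of_le_of_lt (min_le_right _ _) hxy')
      have h1 : x ∉ Set.Iio y := h
      rw [Set.indicator_of_notMem h1, Set.indicator_of_notMem h2]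
  rw [integral_congr_ae hcong, integral_indicator measurableSet_Ioc,
    Measure.restrict_restrict measurableSet_Ioc,
    Set.inter_eq_self_of_subset_left
      (Set.Ioc_subset_Ioc_right (max_le hab (min_le_left _ _)))]


section ML
variable {d : ℝ} {k : ℕ} {M : ℕ → ℝ}

lemma aux_M_mono (hd : 0 < d) (hM : ∀ j < k, M j + d ≤ M (j + 1)) :
    ∀ {i j}, i ≤ j → j ≤ k → M i ≤ M j := by
  intro i j hij hjk
  induction j, hij using Nat.le_induction with
  | base => exact le_refl _
  | succ n hn ih =>
      have h1 : M i ≤ M n := ih (le_trans (Nat.le_succ n) hjk)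
      have h2 : M n + d ≤ M (n + 1) := hM n (by omega)
      linarith

lemma aux_M_ge (hd : 0 < d) (hM0 : M 0 = 0) (hM : ∀ j < k, M j + d ≤ M (j + 1)) :
    ∀ j, j ≤ k → (j : ℝ) * d ≤ M j := by
  intro j
  induction j with
  | zero => intro _; simp [hM0]
  | succ n ih =>
      intro h
      have h1 := ih (by omega)
      have h2 := hM n (by omega)
      push_cast
      linarith

lemma ml_plateau (hd : 0 < d) (hM0 : M 0 = 0) (hM : ∀ j < k, M j + d ≤ M (j + 1))
    {j : ℕ} (hj : j ≤ k) {x : ℝ} (hx1 : M j ≤ x) (hx2 : x ≤ M j + d) :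
    multiLayer d M k x = M j - j * d := by
  unfold multiLayer
  have hsplit := Finset.sum_range_add_sum_Ico
    (fun i => max (min x (M (i + 1)) - M i - d) 0) hj
  rw [← hsplit]
  have h1 : ∑ i ∈ Finset.range j, max (min x (M (i + 1)) - M i - d) 0
      = ∑ i ∈ Finset.range j, ((M (i+1) - (i+1:ℕ) * d) - (M i - i * d)) := by
    apply Finset.sum_congr rfl
    intro i hi
    rw [Finset.mem_range] at hi
    have hle : M (i + 1) ≤ M j := aux_M_mono hd hM (by omega) hj
    have hmin : min x (M (i + 1)) = M (i + 1) := min_eq_right (le_trans hle hx1)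
    have hpos : 0 ≤ M (i + 1) - M i - d := by
      have := hM i (by omega); linarith
    rw [hmin, max_eq_left hpos]
    push_cast; ring
  rw [h1, Finset.sum_range_sub (fun i => M i - i * d)]
  have h2 : ∑ i ∈ Finset.Ico j k, max (min x (M (i + 1)) - M i - d) 0 = 0 := by
    apply Finset.sum_eq_zero
    intro i hi
    rw [Finset.mem_Ico] at hi
    have hle : M j ≤ M i := aux_M_mono hd hM hi.1 (le_of_lt hi.2)
    have : min x (M (i + 1)) - M i - d ≤ 0 := by
      have := min_le_left x (M (i + 1)); linarith
    exact max_eq_right this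
  have h3 : max (x - M k - d) 0 = 0 := by
    have hle : M j ≤ M k := aux_M_mono hd hM hj (le_refl _)
    exact max_eq_right (by linarith)
  rw [h2, h3, hM0]
  push_cast; ring

lemma ml_slope (hd : 0 < d) (hM0 : M 0 = 0) (hM : ∀ j < k, M j + d ≤ M (j + 1))
    {j : ℕ} (hj : j < k) {x : ℝ} (hx1 : M j + d ≤ x) (hx2 : x ≤ M (j + 1)) :
    multiLayer d M k x = x - ((j : ℝ) + 1) * d := by
  unfold multiLayer
  have hsplit := Finset.sum_range_add_sum_Ico
    (fun i => max (min x (M (i + 1)) - M i - d) 0) (Nat.succ_le_of_lt hj)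
  rw [← hsplit, Finset.sum_range_succ]
  have h1 : ∑ i ∈ Finset.range j, max (min x (M (i + 1)) - M i - d) 0
      = ∑ i ∈ Finset.range j, ((M (i+1) - (i+1:ℕ) * d) - (M i - i * d)) := by
    apply Finset.sum_congr rfl
    intro i hi
    rw [Finset.mem_range] at hi
    have hle : M (i + 1) ≤ M j := aux_M_mono hd hM (by omega) (le_of_lt hj)
    have hmin : min x (M (i + 1)) = M (i + 1) := min_eq_right (by linarith)
    have hpos : 0 ≤ M (i + 1) - M i - d := by
      have := hM i (by omega); linarith
    rw [hmin, max_eq_left hpos]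
    push_cast; ring
  rw [h1, Finset.sum_range_sub (fun i => M i - i * d)]
  have hterm : max (min x (M (j + 1)) - M j - d) 0 = x - M j - d := by
    rw [min_eq_left hx2]; exact max_eq_left (by linarith)
  have h2 : ∑ i ∈ Finset.Ico (j + 1) k, max (min x (M (i + 1)) - M i - d) 0 = 0 := by
    apply Finset.sum_eq_zero
    intro i hi
    rw [Finset.mem_Ico] at hi
    have hle : M (j + 1) ≤ M i := aux_M_mono hd hM hi.1 (le_of_lt hi.2)
    have : min x (M (i + 1)) - M i - d ≤ 0 := by
      have := min_le_left x (M (i + 1)); linarith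
    exact max_eq_right this
  have h3 : max (x - M k - d) 0 = 0 := by
    have hle : M (j + 1) ≤ M k := aux_M_mono hd hM hj (le_refl _)
    exact max_eq_right (by linarith)
  rw [hterm, h2, h3, hM0]
  push_cast; ring

lemma ml_tail (hd : 0 < d) (hM0 : M 0 = 0) (hM : ∀ j < k, M j + d ≤ M (j + 1))
    {x : ℝ} (hx : M k + d ≤ x) :
    multiLayer d M k x = x - ((k : ℝ) + 1) * d := by
  unfold multiLayer
  have h1 : ∑ i ∈ Finset.range k, max (min x (M (i + 1)) - M i - d) 0
      = ∑ i ∈ Finset.range k, ((M (i+1) - (i+1:ℕ) * d) - (M i - i * d)) := by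
    apply Finset.sum_congr rfl
    intro i hi
    rw [Finset.mem_range] at hi
    have hle : M (i + 1) ≤ M k := aux_M_mono hd hM (by omega) (le_refl _)
    have hmin : min x (M (i + 1)) = M (i + 1) := min_eq_right (by linarith)
    have hpos : 0 ≤ M (i + 1) - M i - d := by
      have := hM i (by omega); linarith
    rw [hmin, max_eq_left hpos]
    push_cast; ring
  rw [h1, Finset.sum_range_sub (fun i => M i - i * d)]
  rw [max_eq_left (by linarith), hM0]
  push_cast; ring

lemma ml_nonneg (x : ℝ) : 0 ≤ multiLayer d M k x := by
  unfold multiLayer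
  have h1 : (0:ℝ) ≤ ∑ i ∈ Finset.range k, max (min x (M (i + 1)) - M i - d) 0 :=
    Finset.sum_nonneg fun i _ => le_max_right _ _
  have h2 : (0:ℝ) ≤ max (x - M k - d) 0 := le_max_right _ _
  linarith

lemma ml_le_self (hd : 0 < d) (hM0 : M 0 = 0) (hM : ∀ j < k, M j + d ≤ M (j + 1))
    {y : ℝ} (hy : 0 ≤ y) : multiLayer d M k y ≤ y := by
  unfold multiLayer
  have h1 : ∑ i ∈ Finset.range k, max (min y (M (i + 1)) - M i - d) 0
      ≤ ∑ i ∈ Finset.range k, (min y (M (i + 1)) - min y (M i)) := by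
    apply Finset.sum_le_sum
    intro i hi
    rw [Finset.mem_range] at hi
    apply max_le
    · rcases le_or_gt y (M i) with h | h
      · rw [min_eq_left h]
        have := min_le_left y (M (i + 1)); linarith
      · rw [min_eq_right h.le]; linarith
    · have h4 : M i ≤ M (i + 1) := by have := hM i hi; linarith
      have := min_le_min (le_refl y) h4
      linarith
  rw [Finset.sum_range_sub (fun i => min y (M i))] at h1
  have h2 : max (y - M k - d) 0 ≤ y - min y (M k) := by
    apply max_le
    · have := min_le_right y (M k); linarith
    · have := min_le_left y (M k); linarith
  rw [hM0, min_eq_right hy] at h1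
  linarith

end ML

section ML
variable {d : ℝ} {k : ℕ} {M : ℕ → ℝ}

lemma ml_pointwise (hd : 0 < d) (hM0 : M 0 = 0) (hM : ∀ j < k, M j + d ≤ M (j + 1))
    (t : ℝ) {y : ℝ} (hy : 0 ≤ y) :
    Real.exp (t * multiLayer d M k y)
      = 1 + ((∑ j ∈ Finset.range k,
          (Real.exp (t * (max (M j + d) (min (M (j + 1)) y) - ((j : ℝ) + 1) * d))
            - Real.exp (t * (M j + d - ((j : ℝ) + 1) * d))))
        + (Real.exp (t * (max (M k + d) y - ((k : ℝ) + 1) * d))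
            - Real.exp (t * (M k + d - ((k : ℝ) + 1) * d)))) := by
  set φ : ℝ → ℝ := fun z => Real.exp (t * multiLayer d M k z) with hφ
  have hplat : ∀ {j : ℕ}, j ≤ k → ∀ {x : ℝ}, M j ≤ x → x ≤ M j + d →
      φ x = Real.exp (t * (M j - j * d)) := by
    intro j hj x h1 h2
    rw [hφ]; simp only
    rw [ml_plateau hd hM0 hM hj h1 h2]
  have hMnn : ∀ j, j ≤ k → 0 ≤ M j := by
    intro j hj
    have := aux_M_mono hd hM (Nat.zero_le j) hj
    rw [hM0] at this; exact this
  have hsum : ∀ j ∈ Finset.range k,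
      (Real.exp (t * (max (M j + d) (min (M (j + 1)) y) - ((j : ℝ) + 1) * d))
        - Real.exp (t * (M j + d - ((j : ℝ) + 1) * d)))
      = φ (min y (M (j + 1))) - φ (min y (M j)) := by
    intro j hjmem
    rw [Finset.mem_range] at hjmem
    have hab : M j + d ≤ M (j + 1) := hM j hjmem
    have hMj1k : M j + d - ((j : ℝ) + 1) * d = M j - j * d := by ring
    rcases le_or_gt y (M j + d) with h | h
    · have hmax : max (M j + d) (min (M (j + 1)) y) = M j + d :=
        max_eq_left (le_trans (min_le_right _ _) h)
      rw [hmax, sub_self]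
      rcases le_or_gt y (M j) with h2 | h2
      · rw [min_eq_left (le_trans h2 (by linarith)), min_eq_left h2, sub_self]
      · rw [min_eq_left (by linarith : y ≤ M (j + 1)), min_eq_right h2.le]
        rw [hplat (le_of_lt hjmem) h2.le h, hplat (le_of_lt hjmem) (le_refl _) (by linarith)]
        rw [sub_self]
    · rcases le_or_gt y (M (j + 1)) with h2 | h2
      · have hmax : max (M j + d) (min (M (j + 1)) y) = y := by
          rw [min_eq_right h2]; exact max_eq_right h.le
        rw [hmax, min_eq_left h2, min_eq_right (by linarith : M j ≤ y)]
        rw [hφ]; simp only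
        rw [ml_slope hd hM0 hM hjmem h.le h2,
          ml_plateau hd hM0 hM (le_of_lt hjmem) (le_refl _) (by linarith), hMj1k]
      · have hmax : max (M j + d) (min (M (j + 1)) y) = M (j + 1) := by
          rw [min_eq_left h2.le]; exact max_eq_right hab
        rw [hmax, min_eq_right h2.le, min_eq_right (by linarith : M j ≤ y)]
        rw [hφ]; simp only
        rw [ml_slope hd hM0 hM hjmem hab (le_refl _),
          ml_plateau hd hM0 hM (le_of_lt hjmem) (le_refl _) (by linarith), hMj1k]
  rw [Finset.sum_congr rfl hsum, Finset.sum_range_sub (fun j => φ (min y (M j)))]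
  have h0 : φ (min y (M 0)) = 1 := by
    rw [hM0, min_eq_right hy, hplat (Nat.zero_le k) (le_of_eq hM0)
      (by rw [hM0]; linarith)]
    simp [hM0]
  have htail : Real.exp (t * (max (M k + d) y - ((k : ℝ) + 1) * d))
      - Real.exp (t * (M k + d - ((k : ℝ) + 1) * d))
      = φ y - φ (min y (M k)) := by
    have hMk1k : M k + d - ((k : ℝ) + 1) * d = M k - k * d := by ring
    rcases le_or_gt y (M k + d) with h | h
    · rw [max_eq_left h, sub_self]
      rcases le_or_gt y (M k) with h2 | h2
      · rw [min_eq_left h2, sub_self]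
      · rw [min_eq_right h2.le,
          hplat (le_refl k) h2.le h, hplat (le_refl k) (le_refl _) (by linarith), sub_self]
    · rw [max_eq_right h.le, min_eq_right (by linarith : M k ≤ y)]
      rw [hφ]; simp only
      rw [ml_tail hd hM0 hM h.le,
        ml_plateau hd hM0 hM (le_refl k) (le_refl _) (by linarith), hMk1k]
  rw [h0, htail]
  ring
end ML

section Fub
variable {Ω : Type*} [MeasurableSpace Ω]

lemma aux_indrw (X : Ω → ℝ) (f : ℝ → ℝ) :
    (fun p : Ω × ℝ => Set.indicator {x | x < X p.1} f p.2)
      = Set.indicator {p : Ω × ℝ | p.2 < X p.1} (fun p => f p.2) := by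
  funext p
  by_cases h : p.2 < X p.1 <;> simp [Set.indicator, h]

lemma aux_prodmeas (X : Ω → ℝ) (hXm : Measurable X) (f : ℝ → ℝ) (hf : Continuous f)
    (μ : Measure (Ω × ℝ)) :
    AEStronglyMeasurable (fun p : Ω × ℝ => Set.indicator {x | x < X p.1} f p.2) μ := by
  rw [aux_indrw]
  exact ((hf.measurable.comp measurable_snd).indicator
    (measurableSet_lt measurable_snd (hXm.comp measurable_fst))).aestronglyMeasurable

lemma aux_fub (P : Measure Ω) [IsProbabilityMeasure P]
    (X : Ω → ℝ) (hXm : Measurable X) (f : ℝ → ℝ)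
    {S : Set ℝ} (hS : MeasurableSet S)
    (hInt : Integrable (fun p : Ω × ℝ => Set.indicator {x | x < X p.1} f p.2)
      (P.prod (volume.restrict S))) :
    ∫ ω, (∫ x in S, (Set.Iio (X ω)).indicator f x) ∂P
      = ∫ x in S, f x * (P {ω | x < X ω}).toReal := by
  rw [MeasureTheory.integral_integral_swap (f := fun ω x => (Set.Iio (X ω)).indicator f x) hInt]
  apply setIntegral_congr_fun hS
  intro x _
  show ∫ ω, (Set.Iio (X ω)).indicator f x ∂P = f x * (P {ω | x < X ω}).toReal
  have h1 : (fun ω => (Set.Iio (X ω)).indicator f x)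
      = fun ω => Set.indicator {ω | x < X ω} (fun _ => f x) ω := by
    funext ω
    by_cases h : x < X ω <;> simp [Set.indicator, h]
  rw [h1, integral_indicator_const _ (measurableSet_lt measurable_const hXm),
    smul_eq_mul, mul_comm, measureReal_def]

lemma aux_int_finite (P : Measure Ω) [IsProbabilityMeasure P]
    (X : Ω → ℝ) (hXm : Measurable X) (t c : ℝ) {a b : ℝ} (hab : a ≤ b) :
    Integrable (fun p : Ω × ℝ =>
        Set.indicator {x | x < X p.1} (fun x => t * Real.exp (t * (x - c))) p.2)
      (P.prod (volume.restrict (Set.Ioc a b))) := by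
  have hfin : IsFiniteMeasure (volume.restrict (Set.Ioc a b)) :=
    ⟨by rw [Measure.restrict_apply_univ]; exact measure_Ioc_lt_top⟩
  apply Integrable.mono' (g := fun _ => |t| * Real.exp (|t| * (|a| + |b| + |c|)))
    (integrable_const _)
    (aux_prodmeas X hXm _ (by fun_prop) _)
  have hrest : P.prod (volume.restrict (Set.Ioc a b))
      = (P.prod volume).restrict (Set.univ ×ˢ Set.Ioc a b) := by
    rw [← Measure.prod_restrict, Measure.restrict_univ]
  rw [hrest]
  filter_upwards [ae_restrict_mem (MeasurableSet.univ.prod measurableSet_Ioc)] with p hp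
  have hx : p.2 ∈ Set.Ioc a b := hp.2
  have hb1 : ‖Set.indicator {x | x < X p.1} (fun x => t * Real.exp (t * (x - c))) p.2‖
      ≤ ‖t * Real.exp (t * (p.2 - c))‖ := norm_indicator_le_norm_self _ _
  have habs : |p.2| ≤ |a| + |b| := by
    rcases hx with ⟨h1, h2⟩
    rw [abs_le]
    constructor
    · have := neg_abs_le a; have := abs_nonneg b; linarith
    · have := le_abs_self b; have := abs_nonneg a; linarith
  have hexp : t * (p.2 - c) ≤ |t| * (|a| + |b| + |c|) := by
    calc t * (p.2 - c) ≤ |t * (p.2 - c)| := le_abs_self _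
    _ = |t| * |p.2 - c| := abs_mul _ _
    _ ≤ |t| * (|a| + |b| + |c|) := by
        apply mul_le_mul_of_nonneg_left _ (abs_nonneg t)
        have h3 : |p.2 - c| ≤ |p.2| + |c| := abs_sub _ _
        linarith
  calc ‖Set.indicator {x | x < X p.1} (fun x => t * Real.exp (t * (x - c))) p.2‖
      ≤ ‖t * Real.exp (t * (p.2 - c))‖ := hb1
    _ = |t| * Real.exp (t * (p.2 - c)) := by
        rw [norm_mul, Real.norm_eq_abs, Real.norm_eq_abs, Real.abs_exp]
    _ ≤ |t| * Real.exp (|t| * (|a| + |b| + |c|)) :=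
        mul_le_mul_of_nonneg_left (Real.exp_le_exp.2 hexp) (abs_nonneg t)

lemma aux_int_tail (P : Measure Ω) [IsProbabilityMeasure P]
    (X : Ω → ℝ) (hXm : Measurable X) (hX0 : ∀ ω, 0 ≤ X ω) (t : ℝ) {c c' : ℝ}
    (hc' : 0 ≤ c') (hcc : c' ≤ c)
    (hint : Integrable (fun ω => Real.exp (|t| * X ω)) P) :
    Integrable (fun p : Ω × ℝ =>
        Set.indicator {x | x < X p.1} (fun x => t * Real.exp (t * (x - c'))) p.2)
      (P.prod (volume.restrict (Set.Ioi c))) := by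
  set f : ℝ → ℝ := fun x => t * Real.exp (t * (x - c')) with hf
  have hfc : Continuous f := by fun_prop
  rw [integrable_prod_iff (aux_prodmeas X hXm _ hfc _)]
  constructor
  · apply ae_of_all
    intro ω
    show Integrable ((Set.Iio (X ω)).indicator f) (volume.restrict (Set.Ioi c))
    rw [integrable_indicator_iff measurableSet_Iio]
    unfold IntegrableOn
    rw [Measure.restrict_restrict measurableSet_Iio, Set.Iio_inter_Ioi]
    exact (hfc.integrableOn_Icc).mono_set Set.Ioo_subset_Icc_self
  · apply Integrable.mono'
      (g := fun ω => Real.exp (|t| * c) * Real.exp (|t| * X ω)) (hint.const_mul _)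
    · exact ((aux_prodmeas X hXm _ hfc _).norm).integral_prod_right'
    · apply ae_of_all
      intro ω
      have hnn : 0 ≤ ∫ x in Set.Ioi c, ‖Set.indicator {x | x < X ω} f x‖ :=
        integral_nonneg fun x => norm_nonneg _
      rw [Real.norm_eq_abs, abs_of_nonneg hnn]
      set q := max c (X ω) with hq
      have hcq : c ≤ q := le_max_left _ _
      have h1 : (fun x => ‖Set.indicator {x | x < X ω} f x‖)
          = (Set.Iio (X ω)).indicator (fun x => ‖f x‖) := by
        funext x
        by_cases h : x < X ω <;> simp [Set.indicator, h]
      calc ∫ x in Set.Ioi c, ‖Set.indicator {x | x < X ω} f x‖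
          = ∫ x in Set.Ioi c, (Set.Iio (X ω)).indicator (fun x => ‖f x‖) x := by rw [h1]
        _ = ∫ x in Set.Ioc c q, ‖f x‖ := aux_ind_Ioi _ _ _
        _ ≤ ∫ x in Set.Ioc c q, |t| * Real.exp (|t| * (x - c')) := by
            apply setIntegral_mono_on
            · exact ((hfc.norm).integrableOn_Icc).mono_set Set.Ioc_subset_Icc_self
            · exact (((continuous_const.mul
                ((Real.continuous_exp.comp (continuous_const.mul
                  (continuous_id.sub continuous_const)))))).integrableOn_Icc).mono_set
                Set.Ioc_subset_Icc_self
            · exact measurableSet_Ioc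
            · intro x hx
              rw [hf]
              simp only
              rw [norm_mul, Real.norm_eq_abs, Real.norm_eq_abs, Real.abs_exp]
              apply mul_le_mul_of_nonneg_left _ (abs_nonneg t)
              apply Real.exp_le_exp.2
              have hx1 : c' ≤ x := le_trans hcc (le_of_lt hx.1)
              calc t * (x - c') ≤ |t * (x - c')| := le_abs_self _
                _ = |t| * |x - c'| := abs_mul _ _
                _ = |t| * (x - c') := by rw [abs_of_nonneg (show (0:ℝ) ≤ x - c' by linarith)]
        _ = Real.exp (|t| * (q - c')) - Real.exp (|t| * (c - c')) := aux_exp_Ioc _ _ hcq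
        _ ≤ Real.exp (|t| * c) * Real.exp (|t| * X ω) := by
            have h2 : |t| * (q - c') ≤ |t| * (c + X ω) := by
              apply mul_le_mul_of_nonneg_left _ (abs_nonneg t)
              have : q ≤ c + X ω := max_le (le_add_of_nonneg_right (hX0 ω))
                (le_add_of_nonneg_left (le_trans hc' hcc))
              linarith
            have h3 := Real.exp_le_exp.2 h2
            rw [← Real.exp_add, ← mul_add]
            have := Real.exp_pos (|t| * (c - c'))
            linarith
end Fub

end AUX

/-- Moment generating function of the reinsurer's risk portion under the
k-layer stop-loss policy. -/
theorem mgf_multiLayer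
    {Ω : Type*} [MeasurableSpace Ω] (P : Measure Ω) [IsProbabilityMeasure P]
    (X : Ω → ℝ) (hXm : Measurable X) (hX0 : ∀ ω, 0 ≤ X ω)
    (d : ℝ) (hd : 0 < d) (k : ℕ) (hk : 1 ≤ k)
    (M : ℕ → ℝ) (hM0 : M 0 = 0) (hM : ∀ j < k, M j + d ≤ M (j + 1))
    (F : ℝ → ℝ) (hF : ∀ x, F x = (P {ω | X ω ≤ x}).toReal)
    (t : ℝ) (hint : Integrable (fun ω => Real.exp (|t| * X ω)) P) :
    ∫ ω, Real.exp (t * multiLayer d M k (X ω)) ∂P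
      = 1 + t * ((∑ j ∈ Finset.range k,
            ∫ x in (M j + d)..(M (j + 1)),
              Real.exp (t * (x - ((j : ℝ) + 1) * d)) * (1 - F x))
          + ∫ x in Set.Ioi (M k + d),
              Real.exp (t * (x - ((k : ℝ) + 1) * d)) * (1 - F x)) := by
  have hMge := aux_M_ge hd hM0 hM
  have hPF : ∀ x : ℝ, (P {ω | x < X ω}).toReal = 1 - F x := by
    intro x
    have hset : {ω | x < X ω} = {ω | X ω ≤ x}ᶜ := by
      ext ω; simp [not_le]
    rw [hF x, hset, measure_compl (measurableSet_le hXm measurable_const)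
      (measure_ne_top P _), measure_univ,
      ENNReal.toReal_sub_of_le prob_le_one ENNReal.one_ne_top, ENNReal.toReal_one]
  set U : ℕ → Ω → ℝ := fun j ω =>
    Real.exp (t * (max (M j + d) (min (M (j + 1)) (X ω)) - ((j : ℝ) + 1) * d))
      - Real.exp (t * (M j + d - ((j : ℝ) + 1) * d)) with hU
  set T : Ω → ℝ := fun ω =>
    Real.exp (t * (max (M k + d) (X ω) - ((k : ℝ) + 1) * d))
      - Real.exp (t * (M k + d - ((k : ℝ) + 1) * d)) with hT
  have hpt : ∀ ω, Real.exp (t * multiLayer d M k (X ω))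
      = 1 + ((∑ j ∈ Finset.range k, U j ω) + T ω) := fun ω =>
    ml_pointwise hd hM0 hM t (hX0 ω)
  have hexpint : ∀ (Y : Ω → ℝ), Measurable Y → ∀ B : ℝ, (∀ ω, Y ω ≤ B) →
      Integrable (fun ω => Real.exp (Y ω)) P := by
    intro Y hY B hB
    apply Integrable.mono' (integrable_const (Real.exp B))
      (Real.measurable_exp.comp hY).aestronglyMeasurable
    apply ae_of_all; intro ω
    simp only [Function.comp_apply]
    rw [Real.norm_eq_abs, Real.abs_exp]
    exact Real.exp_le_exp.2 (hB ω)
  have hUint : ∀ j, Integrable (U j) P := by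
    intro j
    apply Integrable.sub _ (integrable_const _)
    apply hexpint _ (by fun_prop)
      (|t| * ((|M j + d| + |M (j + 1)|) + |((j : ℝ) + 1) * d|))
    intro ω
    set z := max (M j + d) (min (M (j + 1)) (X ω)) with hz
    have hz2 : z ≤ max (M j + d) (M (j + 1)) :=
      max_le_max (le_refl _) (min_le_left _ _)
    have hzabs : |z| ≤ |M j + d| + |M (j + 1)| := by
      rw [abs_le]
      constructor
      · have h1 : -(|M j + d|) ≤ M j + d := neg_abs_le _
        have h2 := le_max_left (M j + d) (min (M (j + 1)) (X ω))
        have := abs_nonneg (M (j + 1))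
        linarith
      · have h1 := le_abs_self (M j + d)
        have h2 := le_abs_self (M (j + 1))
        have h3 := max_le_max h1 h2
        have := le_trans hz2 h3
        have h4 : max |M j + d| |M (j + 1)| ≤ |M j + d| + |M (j + 1)| :=
          max_le (le_add_of_nonneg_right (abs_nonneg _)) (le_add_of_nonneg_left (abs_nonneg _))
        linarith
    calc t * (z - ((j : ℝ) + 1) * d) ≤ |t * (z - ((j : ℝ) + 1) * d)| := le_abs_self _
      _ = |t| * |z - ((j : ℝ) + 1) * d| := abs_mul _ _
      _ ≤ |t| * ((|M j + d| + |M (j + 1)|) + |((j : ℝ) + 1) * d|) := by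
          apply mul_le_mul_of_nonneg_left _ (abs_nonneg t)
          have := abs_sub z (((j : ℝ) + 1) * d)
          linarith
  have hck : ((k : ℝ) + 1) * d ≤ M k + d := by
    have := hMge k (le_refl k); linarith
  have hck0 : 0 ≤ ((k : ℝ) + 1) * d := by positivity
  have hTint : Integrable T P := by
    apply Integrable.sub _ (integrable_const _)
    apply Integrable.mono' (hint.const_mul (Real.exp (|t| * (M k + d))))
      (Real.measurable_exp.comp (by fun_prop : Measurable fun ω =>
        t * (max (M k + d) (X ω) - ((k : ℝ) + 1) * d))).aestronglyMeasurable
    apply ae_of_all; intro ω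
    simp only [Function.comp_apply]
    rw [Real.norm_eq_abs, Real.abs_exp, ← Real.exp_add]
    apply Real.exp_le_exp.2
    set z := max (M k + d) (X ω) with hz
    have hz1 : M k + d ≤ z := le_max_left _ _
    have hz2 : z ≤ (M k + d) + X ω :=
      max_le (le_add_of_nonneg_right (hX0 ω)) (le_add_of_nonneg_left (by linarith))
    calc t * (z - ((k : ℝ) + 1) * d)
        ≤ |t| * (z - ((k : ℝ) + 1) * d) :=
          mul_le_mul_of_nonneg_right (le_abs_self t) (by linarith)
      _ ≤ |t| * ((M k + d) + X ω) := by
          apply mul_le_mul_of_nonneg_left _ (abs_nonneg t)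
          linarith
      _ = |t| * (M k + d) + |t| * X ω := by ring
  have hUeq : ∀ j ∈ Finset.range k, ∫ ω, U j ω ∂P
      = t * ∫ x in (M j + d)..(M (j + 1)),
          Real.exp (t * (x - ((j : ℝ) + 1) * d)) * (1 - F x) := by
    intro j hj
    rw [Finset.mem_range] at hj
    have hab : M j + d ≤ M (j + 1) := hM j hj
    have h1 : ∀ ω, U j ω = ∫ (x : ℝ) in Set.Ioc (M j + d) (M (j + 1)),
        (Set.Iio (X ω)).indicator
          (fun x => t * Real.exp (t * (x - ((j : ℝ) + 1) * d))) x := by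
      intro ω
      rw [aux_ind_Ioc _ hab, aux_exp_Ioc t _ (le_max_left _ _)]
    calc ∫ ω, U j ω ∂P
        = ∫ ω, (∫ (x : ℝ) in Set.Ioc (M j + d) (M (j + 1)),
            (Set.Iio (X ω)).indicator
              (fun x => t * Real.exp (t * (x - ((j : ℝ) + 1) * d))) x) ∂P :=
          integral_congr_ae (Filter.Eventually.of_forall h1)
      _ = ∫ (x : ℝ) in Set.Ioc (M j + d) (M (j + 1)),
            (t * Real.exp (t * (x - ((j : ℝ) + 1) * d))) * (P {ω | x < X ω}).toReal :=
          aux_fub P X hXm _ measurableSet_Ioc (aux_int_finite P X hXm t _ hab)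
      _ = t * ∫ x in (M j + d)..(M (j + 1)),
            Real.exp (t * (x - ((j : ℝ) + 1) * d)) * (1 - F x) := by
          rw [intervalIntegral.integral_of_le hab, ← integral_const_mul]
          apply setIntegral_congr_fun measurableSet_Ioc
          intro x _
          dsimp only
          rw [hPF x]; ring
  have hTeq : ∫ ω, T ω ∂P
      = t * ∫ (x : ℝ) in Set.Ioi (M k + d),
          Real.exp (t * (x - ((k : ℝ) + 1) * d)) * (1 - F x) := by
    have h1 : ∀ ω, T ω = ∫ (x : ℝ) in Set.Ioi (M k + d),
        (Set.Iio (X ω)).indicator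
          (fun x => t * Real.exp (t * (x - ((k : ℝ) + 1) * d))) x := by
      intro ω
      rw [aux_ind_Ioi _ _ _, aux_exp_Ioc t _ (le_max_left _ _)]
    calc ∫ ω, T ω ∂P
        = ∫ ω, (∫ (x : ℝ) in Set.Ioi (M k + d),
            (Set.Iio (X ω)).indicator
              (fun x => t * Real.exp (t * (x - ((k : ℝ) + 1) * d))) x) ∂P :=
          integral_congr_ae (Filter.Eventually.of_forall h1)
      _ = ∫ (x : ℝ) in Set.Ioi (M k + d),
            (t * Real.exp (t * (x - ((k : ℝ) + 1) * d))) * (P {ω | x < X ω}).toReal :=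
          aux_fub P X hXm _ measurableSet_Ioi
            (aux_int_tail P X hXm hX0 t hck0 hck hint)
      _ = t * ∫ (x : ℝ) in Set.Ioi (M k + d),
            Real.exp (t * (x - ((k : ℝ) + 1) * d)) * (1 - F x) := by
          rw [← integral_const_mul]
          apply setIntegral_congr_fun measurableSet_Ioi
          intro x _
          dsimp only
          rw [hPF x]; ring
  have hUsumint : Integrable (fun ω => ∑ j ∈ Finset.range k, U j ω) P :=
    integrable_finset_sum _ (fun j _ => hUint j)
  have hsum2 : Integrable (fun ω => (∑ j ∈ Finset.range k, U j ω) + T ω) P := by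
    exact hUsumint.add hTint
  calc ∫ ω, Real.exp (t * multiLayer d M k (X ω)) ∂P
      = ∫ ω, (1 + ((∑ j ∈ Finset.range k, U j ω) + T ω)) ∂P :=
        integral_congr_ae (Filter.Eventually.of_forall hpt)
    _ = 1 + ((∑ j ∈ Finset.range k, ∫ ω, U j ω ∂P) + ∫ ω, T ω ∂P) := by
        rw [integral_add (integrable_const 1) hsum2,
          integral_add hUsumint hTint,
          integral_finset_sum _ (fun j _ => hUint j), integral_const, probReal_univ,
          one_smul]
    _ = 1 + t * ((∑ j ∈ Finset.range k,
          ∫ x in (M j + d)..(M (j + 1)),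
            Real.exp (t * (x - ((j : ℝ) + 1) * d)) * (1 - F x))
        + ∫ (x : ℝ) in Set.Ioi (M k + d),
            Real.exp (t * (x - ((k : ℝ) + 1) * d)) * (1 - F x)) := by
        rw [Finset.sum_congr rfl hUeq, hTeq, ← Finset.mul_sum]
        ring
end

section
/- Let X be a nonnegative random variable on a probability space (Ω, ℱ, ℙ) with distribution function F_X, and let g_k be the k-layer stop-loss policy with retention d and thresholds M_1, …, M_k. Then for every t ∈ ℝ, the moment generating function of the insurer's retained risk X − g_k(X) satisfies E[e^{t·(X − g_k(X))}] = 1 + t·Σ_{j=0}^{k} ∫_{M_j}^{M_j+d} e^{t(x − M_j + j d)}(1 − F_X(x)) dx, where M_0 = 0. -/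
open MeasureTheory ProbabilityTheory

namespace MgfAux

/-- Clamp of `y` into `[M j, M j + d]`. -/
noncomputable def C (d : ℝ) (M : ℕ → ℝ) (j : ℕ) (y : ℝ) : ℝ :=
  min (M j + d) (max (M j) y)

lemma chain {d : ℝ} {M : ℕ → ℝ} {k : ℕ} (hd : 0 < d)
    (hM : ∀ j < k, M j + d ≤ M (j + 1)) :
    ∀ i j, i < j → j ≤ k → M i + d ≤ M j := by
  intro i j hij hjk
  induction j with
  | zero => omega
  | succ n ih =>
    rcases Nat.lt_succ_iff_lt_or_eq.mp hij with h | h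
    · have h1 := ih h (by omega)
      have h2 := hM n (by omega)
      linarith
    · subst h
      exact hM i (by omega)

lemma retained_eq {d : ℝ} {M : ℕ → ℝ} {k : ℕ} (hd : 0 < d) (hM0 : M 0 = 0)
    (hM : ∀ j < k, M j + d ≤ M (j + 1)) {y : ℝ} (hy : 0 ≤ y) :
    y - multiLayer d M k y = ∑ j ∈ Finset.range (k + 1), (C d M j y - M j) := by
  have hterm : ∀ j < k,
      max (min y (M (j + 1)) - M j - d) 0
        = (min y (M (j + 1)) - min y (M j)) - (C d M j y - M j) := by
    intro j hj
    have h := hM j hj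
    simp only [C, min_def, max_def]
    split_ifs <;> linarith
  have hlast : max (y - M k - d) 0 = (y - min y (M k)) - (C d M k y - M k) := by
    simp only [C, min_def, max_def]
    split_ifs <;> linarith
  have hsum : ∑ j ∈ Finset.range k, (min y (M (j + 1)) - min y (M j))
      = min y (M k) - min y (M 0) := Finset.sum_range_sub (fun i => min y (M i)) k
  have hmin0 : min y (M 0) = 0 := by rw [hM0]; exact min_eq_right hy
  rw [multiLayer, Finset.sum_congr rfl (fun j hj => hterm j (Finset.mem_range.mp hj)),
    Finset.sum_sub_distrib, hsum, hlast, Finset.sum_range_succ, hmin0]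
  ring

lemma telescope (t d : ℝ) (r : ℕ → ℝ) (n : ℕ)
    (h0 : ∀ j, 0 ≤ r j) (hfull : ∀ i j, i < j → j < n → 0 < r j → r i = d) :
    ∑ j ∈ Finset.range n, (Real.exp (t * (r j + (j : ℝ) * d)) - Real.exp (t * ((j : ℝ) * d)))
      = Real.exp (t * ∑ j ∈ Finset.range n, r j) - 1 := by
  induction n with
  | zero => simp
  | succ n ih =>
    have ih' := ih (fun i j hij hjn => hfull i j hij (by omega))
    rw [Finset.sum_range_succ, Finset.sum_range_succ, ih']
    rcases eq_or_lt_of_le (h0 n) with h | h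
    · rw [← h]
      ring_nf
    · have hall : ∀ i ∈ Finset.range n, r i = d := fun i hi =>
        hfull i n (Finset.mem_range.mp hi) (by omega) h
      have hsum : ∑ j ∈ Finset.range n, r j = (n : ℝ) * d := by
        rw [Finset.sum_congr rfl hall, Finset.sum_const, Finset.card_range, nsmul_eq_mul]
      rw [hsum]
      have h3 : t * ((n : ℝ) * d + r n) = t * (r n + (n : ℝ) * d) := by ring
      rw [h3]
      ring

lemma pointwise {d : ℝ} {M : ℕ → ℝ} {k : ℕ} (hd : 0 < d) (hM0 : M 0 = 0)
    (hM : ∀ j < k, M j + d ≤ M (j + 1)) (t : ℝ) {y : ℝ} (hy : 0 ≤ y) :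
    Real.exp (t * (y - multiLayer d M k y))
      = 1 + ∑ j ∈ Finset.range (k + 1),
          (Real.exp (t * ((C d M j y - M j) + (j : ℝ) * d)) - Real.exp (t * ((j : ℝ) * d))) := by
  have h0 : ∀ j, 0 ≤ C d M j y - M j := by
    intro j
    have : M j ≤ C d M j y := le_min (by linarith) (le_max_left _ _)
    linarith
  have hfull : ∀ i j, i < j → j < k + 1 → 0 < C d M j y - M j → C d M i y - M i = d := by
    intro i j hij hjk hpos
    have hyMj : M j < y := by
      by_contra hcon
      push_neg at hcon
      have : C d M j y = M j := by
        rw [C, max_eq_left hcon, min_eq_right (by linarith)]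
      linarith
    have hij' : M i + d ≤ M j := chain hd hM i j hij (by omega)
    have : C d M i y = M i + d := by
      rw [C, max_eq_right (by linarith), min_eq_left (by linarith)]
    rw [this]; ring
  rw [retained_eq hd hM0 hM hy,
    telescope t d (fun j => C d M j y - M j) (k + 1) h0 hfull]
  ring


lemma ftc (t m e u v : ℝ) :
    ∫ x in u..v, t * Real.exp (t * (x - m + e))
      = Real.exp (t * (v - m + e)) - Real.exp (t * (u - m + e)) := by
  have hderiv : ∀ x ∈ Set.uIcc u v,
      HasDerivAt (fun x => Real.exp (t * (x - m + e))) (t * Real.exp (t * (x - m + e))) x := by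
    intro x _
    have h1 : HasDerivAt (fun x : ℝ => t * (x - m + e)) t x := by
      simpa using (((hasDerivAt_id x).sub_const m).add_const e).const_mul t
    simpa [mul_comm] using h1.exp
  exact intervalIntegral.integral_eq_sub_of_hasDerivAt hderiv
    ((Continuous.intervalIntegrable (by continuity) u v))

lemma if_intervalIntegrable (t m e y : ℝ) (u v : ℝ) :
    IntervalIntegrable (fun x => if x < y then t * Real.exp (t * (x - m + e)) else 0)
      volume u v := by
  have heq : (fun x => if x < y then t * Real.exp (t * (x - m + e)) else 0)
      = Set.indicator (Set.Iio y) (fun x => t * Real.exp (t * (x - m + e))) := by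
    ext x
    simp [Set.indicator_apply, Set.mem_Iio]
  rw [heq, intervalIntegrable_iff]
  exact ((Continuous.intervalIntegrable (by continuity) u v).def').indicator measurableSet_Iio

lemma layer_integral (t m e : ℝ) {dd : ℝ} (hdd : 0 ≤ dd) (y : ℝ) :
    ∫ x in m..(m + dd), (if x < y then t * Real.exp (t * (x - m + e)) else 0)
      = Real.exp (t * ((min (m + dd) (max m y) - m) + e)) - Real.exp (t * e) := by
  rcases le_or_gt y m with hym | hym
  · have hc : min (m + dd) (max m y) = m := by
      rw [max_eq_left hym, min_eq_right (by linarith)]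
    rw [hc]
    have : ∀ x ∈ Set.uIcc m (m + dd),
        (if x < y then t * Real.exp (t * (x - m + e)) else 0) = 0 := by
      intro x hx
      rw [Set.uIcc_of_le (by linarith)] at hx
      rw [if_neg (by push_neg; linarith [hx.1])]
    rw [intervalIntegral.integral_congr this]
    simp
  · set c := min (m + dd) (max m y) with hc
    have hmaxy : max m y = y := max_eq_right hym.le
    have hmc : m ≤ c := le_min (by linarith) (by rw [hmaxy]; linarith)
    have hcb : c ≤ m + dd := min_le_left _ _
    have hsplit : ∫ x in m..(m + dd), (if x < y then t * Real.exp (t * (x - m + e)) else 0)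
        = (∫ x in m..c, (if x < y then t * Real.exp (t * (x - m + e)) else 0))
          + ∫ x in c..(m + dd), (if x < y then t * Real.exp (t * (x - m + e)) else 0) := by
      rw [intervalIntegral.integral_add_adjacent_intervals
        (if_intervalIntegrable t m e y m c) (if_intervalIntegrable t m e y c (m + dd))]
    have h1 : (∫ x in m..c, (if x < y then t * Real.exp (t * (x - m + e)) else 0))
        = ∫ x in m..c, t * Real.exp (t * (x - m + e)) := by
      apply intervalIntegral.integral_congr_ae
      have hy' : ∀ᵐ x : ℝ, x ≠ y := by
        rw [MeasureTheory.ae_iff]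
        have : {x : ℝ | ¬ x ≠ y} = {y} := by ext x; simp
        rw [this]
        exact measure_singleton y
      filter_upwards [hy'] with x hxy hx
      rw [Set.uIoc_of_le hmc] at hx
      have hxc : x ≤ c := hx.2
      have hxy' : x < y := lt_of_le_of_ne (le_trans hxc (by rw [hc, hmaxy]; exact min_le_right _ _)) hxy
      rw [if_pos hxy']
    have h2 : (∫ x in c..(m + dd), (if x < y then t * Real.exp (t * (x - m + e)) else 0)) = 0 := by
      rcases le_or_gt y (m + dd) with hyb | hyb
      · have hcy : c = y := by rw [hc, hmaxy, min_eq_right hyb]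
        have hzero : (∫ x in c..(m + dd), (if x < y then t * Real.exp (t * (x - m + e)) else 0))
            = ∫ x in c..(m + dd), (0 : ℝ) := by
          apply intervalIntegral.integral_congr_ae
          apply Filter.Eventually.of_forall
          intro x hx
          rw [Set.uIoc_of_le hcb] at hx
          rw [if_neg (by push_neg; rw [← hcy]; exact hx.1.le)]
        rw [hzero]
        simp
      · have hcb' : c = m + dd := by rw [hc, hmaxy, min_eq_left hyb.le]
        rw [hcb', intervalIntegral.integral_same]
    rw [hsplit, h1, h2, ftc, add_zero]
    have hme : m - m + e = e := by ring
    rw [hme]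




lemma fubini_layer {Ω : Type*} [MeasurableSpace Ω] (P : Measure Ω) [IsProbabilityMeasure P]
    (X : Ω → ℝ) (hXm : Measurable X) {a b : ℝ} (hab : a ≤ b)
    (f : ℝ → ℝ) (hf : Continuous f) :
    ∫ ω, (∫ x in a..b, if x < X ω then f x else 0) ∂P
      = ∫ x in a..b, f x * (P {ω | x < X ω}).toReal := by
  have hSm : ∀ x : ℝ, MeasurableSet {ω | x < X ω} := fun x =>
    measurableSet_lt measurable_const hXm
  set ν : Measure ℝ := volume.restrict (Set.Ioc a b) with hν
  -- the function on the product
  set G : Ω × ℝ → ℝ := fun p => if p.2 < X p.1 then f p.2 else 0 with hG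
  have hGmeas : Measurable G := by
    apply Measurable.ite
    · exact measurableSet_lt measurable_snd (hXm.comp measurable_fst)
    · exact hf.measurable.comp measurable_snd
    · exact measurable_const
  obtain ⟨Cb, hCb⟩ : ∃ Cb, ∀ x ∈ Set.Icc a b, ‖f x‖ ≤ Cb := by
    rcases (isCompact_Icc (a := a) (b := b)).exists_bound_of_continuousOn
      (hf.norm.continuousOn) with ⟨Cb, h⟩
    exact ⟨Cb, fun x hx => by simpa using h x hx⟩
  have hCb0 : 0 ≤ Cb := le_trans (norm_nonneg _) (hCb a ⟨le_refl a, hab⟩)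
  have haein : ∀ᵐ p ∂(P.prod ν), p.2 ∈ Set.Ioc a b := by
    rw [MeasureTheory.ae_iff]
    have hset : {p : Ω × ℝ | ¬ p.2 ∈ Set.Ioc a b}
        = (Set.univ : Set Ω) ×ˢ (Set.Ioc a b)ᶜ := by
      ext p; simp
    rw [hset, Measure.prod_prod, hν, Measure.restrict_apply measurableSet_Ioc.compl]
    simp
  have hGint : Integrable G (P.prod ν) := by
    apply Integrable.mono' (integrable_const Cb) hGmeas.aestronglyMeasurable
    filter_upwards [haein] with p hp
    rw [hG]
    dsimp only
    split_ifs
    · exact hCb p.2 ⟨hp.1.le, hp.2⟩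
    · simpa using hCb0
  rw [intervalIntegral.integral_of_le hab]
  have hswap := MeasureTheory.integral_integral_swap (μ := P) (ν := ν)
    (f := fun ω x => if x < X ω then f x else 0) hGint
  calc ∫ ω, (∫ x in a..b, if x < X ω then f x else 0) ∂P
      = ∫ ω, (∫ x, (if x < X ω then f x else 0) ∂ν) ∂P := by
        congr 1
        ext ω
        rw [intervalIntegral.integral_of_le hab]
    _ = ∫ x, (∫ ω, (if x < X ω then f x else 0) ∂P) ∂ν := hswap
    _ = ∫ x, f x * (P {ω | x < X ω}).toReal ∂ν := by
        congr 1
        ext x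
        have : (fun ω => if x < X ω then f x else 0)
            = Set.indicator {ω | x < X ω} (fun _ => f x) := by
          ext ω; simp [Set.indicator_apply, Set.mem_setOf_eq]
        rw [this, MeasureTheory.integral_indicator_const _ (hSm x), smul_eq_mul, mul_comm]
        rfl

lemma one_sub_F {Ω : Type*} [MeasurableSpace Ω] (P : Measure Ω) [IsProbabilityMeasure P]
    (X : Ω → ℝ) (hXm : Measurable X) (F : ℝ → ℝ)
    (hF : ∀ x, F x = (P {ω | X ω ≤ x}).toReal) (x : ℝ) :
    1 - F x = (P {ω | x < X ω}).toReal := by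
  rw [hF]
  have hcompl : {ω | X ω ≤ x}ᶜ = {ω | x < X ω} := by
    ext ω; simp [not_le]
  have h1 : P {ω | X ω ≤ x} + P {ω | x < X ω} = 1 := by
    have := measure_add_measure_compl (μ := P) (s := {ω | X ω ≤ x}) (hXm measurableSet_Iic)
    rwa [hcompl, measure_univ] at this
  have h2 : (P {ω | X ω ≤ x}).toReal + (P {ω | x < X ω}).toReal = 1 := by
    rw [← ENNReal.toReal_add (measure_ne_top _ _) (measure_ne_top _ _), h1, ENNReal.toReal_one]
  linarith





lemma g_integrable {Ω : Type*} [MeasurableSpace Ω] (P : Measure Ω) [IsProbabilityMeasure P]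
    (X : Ω → ℝ) (hXm : Measurable X) {d : ℝ} (hd : 0 < d) (M : ℕ → ℝ) (t : ℝ) (j : ℕ) :
    Integrable (fun ω =>
      Real.exp (t * ((C d M j (X ω) - M j) + (j : ℝ) * d)) - Real.exp (t * ((j : ℝ) * d))) P := by
  have hCcont : Continuous fun y : ℝ => C d M j y := by
    unfold C
    exact continuous_const.min (continuous_const.max continuous_id)
  have hmeas : Measurable fun ω =>
      Real.exp (t * ((C d M j (X ω) - M j) + (j : ℝ) * d)) - Real.exp (t * ((j : ℝ) * d)) := by
    apply Measurable.sub _ measurable_const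
    exact (Real.continuous_exp.comp
      ((continuous_const.mul (((hCcont.sub continuous_const).add continuous_const))))).measurable.comp hXm
  apply Integrable.mono' (integrable_const (2 * Real.exp (|t| * (d + (j : ℝ) * d))))
    hmeas.aestronglyMeasurable
  apply Filter.Eventually.of_forall
  intro ω
  have hjd : 0 ≤ (j : ℝ) * d := mul_nonneg (Nat.cast_nonneg j) hd.le
  have hClo : M j ≤ C d M j (X ω) := le_min (by linarith) (le_max_left _ _)
  have hChi : C d M j (X ω) ≤ M j + d := min_le_left _ _
  have hbound : ∀ s : ℝ, 0 ≤ s → s ≤ d + (j : ℝ) * d →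
      Real.exp (t * s) ≤ Real.exp (|t| * (d + (j : ℝ) * d)) := by
    intro s hs0 hsd
    apply Real.exp_le_exp.mpr
    calc t * s ≤ |t * s| := le_abs_self _
      _ = |t| * s := by rw [abs_mul, abs_of_nonneg hs0]
      _ ≤ |t| * (d + (j : ℝ) * d) := by
          apply mul_le_mul_of_nonneg_left hsd (abs_nonneg t)
  have h1 := hbound ((C d M j (X ω) - M j) + (j : ℝ) * d) (by linarith) (by linarith)
  have h2 := hbound ((j : ℝ) * d) hjd (by linarith)
  calc ‖Real.exp (t * ((C d M j (X ω) - M j) + (j : ℝ) * d)) - Real.exp (t * ((j : ℝ) * d))‖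
      ≤ ‖Real.exp (t * ((C d M j (X ω) - M j) + (j : ℝ) * d))‖ + ‖Real.exp (t * ((j : ℝ) * d))‖ :=
        norm_sub_le _ _
    _ ≤ 2 * Real.exp (|t| * (d + (j : ℝ) * d)) := by
        rw [Real.norm_eq_abs, Real.norm_eq_abs, abs_of_pos (Real.exp_pos _),
          abs_of_pos (Real.exp_pos _)]
        linarith

lemma layer_value {Ω : Type*} [MeasurableSpace Ω] (P : Measure Ω) [IsProbabilityMeasure P]
    (X : Ω → ℝ) (hXm : Measurable X) {d : ℝ} (hd : 0 < d) (M : ℕ → ℝ)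
    (F : ℝ → ℝ) (hF : ∀ x, F x = (P {ω | X ω ≤ x}).toReal) (t : ℝ) (j : ℕ) :
    ∫ ω, (Real.exp (t * ((C d M j (X ω) - M j) + (j : ℝ) * d))
        - Real.exp (t * ((j : ℝ) * d))) ∂P
      = t * ∫ x in (M j)..(M j + d),
          Real.exp (t * (x - M j + (j : ℝ) * d)) * (1 - F x) := by
  set e : ℝ := (j : ℝ) * d with he
  have hab : M j ≤ M j + d := by linarith
  have hpt : ∀ ω, Real.exp (t * ((C d M j (X ω) - M j) + e)) - Real.exp (t * e)
      = ∫ x in (M j)..(M j + d),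
          (if x < X ω then t * Real.exp (t * (x - M j + e)) else 0) := by
    intro ω
    rw [layer_integral t (M j) e hd.le (X ω)]
    rfl
  calc ∫ ω, (Real.exp (t * ((C d M j (X ω) - M j) + e)) - Real.exp (t * e)) ∂P
      = ∫ ω, (∫ x in (M j)..(M j + d),
          (if x < X ω then t * Real.exp (t * (x - M j + e)) else 0)) ∂P := by
        exact integral_congr_ae (Filter.Eventually.of_forall hpt)
    _ = ∫ x in (M j)..(M j + d),
          (t * Real.exp (t * (x - M j + e))) * (P {ω | x < X ω}).toReal := by
        exact fubini_layer P X hXm hab (fun x => t * Real.exp (t * (x - M j + e)))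
          (by continuity)
    _ = ∫ x in (M j)..(M j + d),
          t * (Real.exp (t * (x - M j + e)) * (1 - F x)) := by
        apply intervalIntegral.integral_congr
        intro x _
        show t * Real.exp (t * (x - M j + e)) * (P {ω | x < X ω}).toReal
          = t * (Real.exp (t * (x - M j + e)) * (1 - F x))
        rw [one_sub_F P X hXm F hF x]
        ring
    _ = t * ∫ x in (M j)..(M j + d), Real.exp (t * (x - M j + e)) * (1 - F x) := by
        rw [intervalIntegral.integral_const_mul]

end MgfAux

/-- Moment generating function of the insurer's retained risk `X − g_k(X)` under the
k-layer stop-loss policy. -/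
theorem mgf_retained_multiLayer
    {Ω : Type*} [MeasurableSpace Ω] (P : Measure Ω) [IsProbabilityMeasure P]
    (X : Ω → ℝ) (hXm : Measurable X) (hX0 : ∀ ω, 0 ≤ X ω)
    (d : ℝ) (hd : 0 < d) (k : ℕ) (hk : 1 ≤ k)
    (M : ℕ → ℝ) (hM0 : M 0 = 0) (hM : ∀ j < k, M j + d ≤ M (j + 1))
    (F : ℝ → ℝ) (hF : ∀ x, F x = (P {ω | X ω ≤ x}).toReal)
    (t : ℝ) :
    ∫ ω, Real.exp (t * (X ω - multiLayer d M k (X ω))) ∂P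
      = 1 + t * ∑ j ∈ Finset.range (k + 1),
          ∫ x in (M j)..(M j + d),
            Real.exp (t * (x - M j + (j : ℝ) * d)) * (1 - F x) := by
  classical
  have hint : ∀ j ∈ Finset.range (k + 1), Integrable (fun ω =>
      Real.exp (t * ((MgfAux.C d M j (X ω) - M j) + (j : ℝ) * d))
        - Real.exp (t * ((j : ℝ) * d))) P :=
    fun j _ => MgfAux.g_integrable P X hXm hd M t j
  calc ∫ ω, Real.exp (t * (X ω - multiLayer d M k (X ω))) ∂P
      = ∫ ω, (1 + ∑ j ∈ Finset.range (k + 1),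
          (Real.exp (t * ((MgfAux.C d M j (X ω) - M j) + (j : ℝ) * d))
            - Real.exp (t * ((j : ℝ) * d)))) ∂P := by
        exact integral_congr_ae (Filter.Eventually.of_forall
          (fun ω => MgfAux.pointwise hd hM0 hM t (hX0 ω)))
    _ = 1 + ∑ j ∈ Finset.range (k + 1), ∫ ω,
          (Real.exp (t * ((MgfAux.C d M j (X ω) - M j) + (j : ℝ) * d))
            - Real.exp (t * ((j : ℝ) * d))) ∂P := by
        rw [integral_add (integrable_const 1) (integrable_finset_sum _ hint),
          integral_finset_sum _ hint]
        simp
    _ = 1 + ∑ j ∈ Finset.range (k + 1), t * ∫ x in (M j)..(M j + d),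
          Real.exp (t * (x - M j + (j : ℝ) * d)) * (1 - F x) := by
        congr 1
        exact Finset.sum_congr rfl (fun j _ => MgfAux.layer_value P X hXm hd M F hF t j)
    _ = 1 + t * ∑ j ∈ Finset.range (k + 1), ∫ x in (M j)..(M j + d),
          Real.exp (t * (x - M j + (j : ℝ) * d)) * (1 - F x) := by
        rw [Finset.mul_sum]
end

section
/- Let X be a nonnegative square-integrable random variable on a probability space (Ω, ℱ, ℙ) and let ω ∈ [0,1]. The proportional contract h*(x) = (1−ω)x minimizes the convex combination of variances Q_h = ω·Var(h(X)) + (1−ω)·Var(X − h(X)) over all measurable functions h : ℝ → ℝ with 0 ≤ h(x) ≤ x for all x ≥ 0; moreover its value is Q_{h*} = ω(1−ω)·Var(X). -/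
open MeasureTheory ProbabilityTheory

lemma variance_convex_combo_key
    {Ω : Type*} [MeasurableSpace Ω] (P : Measure Ω) [IsProbabilityMeasure P]
    (Y Z : Ω → ℝ) (hY : MemLp Y 2 P) (hZ : MemLp Z 2 P) (ω : ℝ) :
    ω * variance Y P + (1 - ω) * variance Z P
      = variance (fun a => ω * Y a - (1 - ω) * Z a) P
        + ω * (1 - ω) * variance (fun a => Y a + Z a) P := by
  have hW : MemLp (fun a => ω * Y a - (1 - ω) * Z a) 2 P :=
    (hY.const_mul ω).sub (hZ.const_mul (1 - ω))
  have hS : MemLp (fun a => Y a + Z a) 2 P := hY.add hZ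
  have iY2 : Integrable (fun a => Y a ^ 2) P := by simpa using hY.integrable_sq
  have iZ2 : Integrable (fun a => Z a ^ 2) P := by simpa using hZ.integrable_sq
  have iS2 : Integrable (fun a => (Y a + Z a) ^ 2) P := by simpa using hS.integrable_sq
  have iYZ : Integrable (fun a => Y a * Z a) P := by
    have h : (fun a => Y a * Z a)
        = fun a => (((Y a + Z a) ^ 2 - Y a ^ 2) - Z a ^ 2) / 2 := funext fun a => by ring
    rw [h]
    exact ((iS2.sub iY2).sub iZ2).div_const 2
  have iY : Integrable Y P := hY.integrable one_le_two
  have iZ : Integrable Z P := hZ.integrable one_le_two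
  rw [variance_eq_sub hY, variance_eq_sub hZ, variance_eq_sub hW, variance_eq_sub hS]
  have eW2 : (∫ a, (fun a => ω * Y a - (1 - ω) * Z a) a ^ 2 ∂P)
      = ω ^ 2 * (∫ a, Y a ^ 2 ∂P) - 2 * ω * (1 - ω) * (∫ a, Y a * Z a ∂P)
        + (1 - ω) ^ 2 * (∫ a, Z a ^ 2 ∂P) := by
    have h : (fun a => (ω * Y a - (1 - ω) * Z a) ^ 2)
        = fun a => ω ^ 2 * (Y a ^ 2) - 2 * ω * (1 - ω) * (Y a * Z a)
          + (1 - ω) ^ 2 * (Z a ^ 2) := funext fun a => by ring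
    simp only [h]
    have I1 : Integrable (fun a => ω ^ 2 * Y a ^ 2 - 2 * ω * (1 - ω) * (Y a * Z a)) P :=
      (iY2.const_mul _).sub (iYZ.const_mul _)
    have I2 : Integrable (fun a => (1 - ω) ^ 2 * Z a ^ 2) P := iZ2.const_mul _
    have I3 : Integrable (fun a => ω ^ 2 * Y a ^ 2) P := iY2.const_mul _
    have I4 : Integrable (fun a => 2 * ω * (1 - ω) * (Y a * Z a)) P := iYZ.const_mul _
    rw [integral_add I1 I2, integral_sub I3 I4,
      integral_const_mul, integral_const_mul, integral_const_mul]
  have eW : (∫ a, (fun a => ω * Y a - (1 - ω) * Z a) a ∂P)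
      = ω * (∫ a, Y a ∂P) - (1 - ω) * (∫ a, Z a ∂P) := by
    simp only
    have I1 : Integrable (fun a => ω * Y a) P := iY.const_mul _
    have I2 : Integrable (fun a => (1 - ω) * Z a) P := iZ.const_mul _
    rw [integral_sub I1 I2, integral_const_mul, integral_const_mul]
  have eS2 : (∫ a, (fun a => Y a + Z a) a ^ 2 ∂P)
      = (∫ a, Y a ^ 2 ∂P) + 2 * (∫ a, Y a * Z a ∂P) + (∫ a, Z a ^ 2 ∂P) := by
    have h : (fun a => (Y a + Z a) ^ 2)
        = fun a => Y a ^ 2 + 2 * (Y a * Z a) + Z a ^ 2 := funext fun a => by ring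
    simp only [h]
    have I1 : Integrable (fun a => Y a ^ 2 + 2 * (Y a * Z a)) P := iY2.add (iYZ.const_mul _)
    have I2 : Integrable (fun a => 2 * (Y a * Z a)) P := iYZ.const_mul _
    rw [integral_add I1 iZ2, integral_add iY2 I2, integral_const_mul]
  have eS : (∫ a, (fun a => Y a + Z a) a ∂P) = (∫ a, Y a ∂P) + (∫ a, Z a ∂P) := by
    simp only
    rw [integral_add iY iZ]
  simp only [Pi.pow_apply] at *
  rw [eW2, eW, eS2, eS]
  ring

/-- The proportional contract `h*(x) = (1−ω)x` minimizes
`Q_h = ω·Var(h(X)) + (1−ω)·Var(X − h(X))` over all measurable `h` with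
`0 ≤ h(x) ≤ x` for `x ≥ 0`, and its value is `ω(1−ω)·Var(X)`. -/
theorem proportional_minimizes_convex_combination_of_variances
    {Ω : Type*} [MeasurableSpace Ω] (P : Measure Ω) [IsProbabilityMeasure P]
    (X : Ω → ℝ) (hXm : Measurable X) (hX0 : ∀ a, 0 ≤ X a)
    (hX2 : MemLp X 2 P)
    (ω : ℝ) (hω : ω ∈ Set.Icc (0 : ℝ) 1) :
    (∀ h : ℝ → ℝ, Measurable h → (∀ x, 0 ≤ x → 0 ≤ h x ∧ h x ≤ x) →
        ω * variance (fun a => (1 - ω) * X a) P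
            + (1 - ω) * variance (fun a => X a - (1 - ω) * X a) P
          ≤ ω * variance (fun a => h (X a)) P
            + (1 - ω) * variance (fun a => X a - h (X a)) P)
      ∧ ω * variance (fun a => (1 - ω) * X a) P
            + (1 - ω) * variance (fun a => X a - (1 - ω) * X a) P
          = ω * (1 - ω) * variance X P := by
  obtain ⟨hω0, hω1⟩ := hω
  have hval : ω * variance (fun a => (1 - ω) * X a) P
      + (1 - ω) * variance (fun a => X a - (1 - ω) * X a) P
      = ω * (1 - ω) * variance X P := by
    have h1 : variance (fun a => (1 - ω) * X a) P = (1 - ω) ^ 2 * variance X P :=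
      variance_const_mul (1 - ω) X P
    have h2 : (fun a => X a - (1 - ω) * X a) = fun a => ω * X a := funext fun a => by ring
    have h3 : variance (fun a => ω * X a) P = ω ^ 2 * variance X P := variance_const_mul ω X P
    rw [h1, h2, h3]
    ring
  refine ⟨fun h hm hb => ?_, hval⟩
  rw [hval]
  set Y : Ω → ℝ := fun a => h (X a) with hYdef
  set Z : Ω → ℝ := fun a => X a - h (X a) with hZdef
  have hY2 : MemLp Y 2 P := by
    refine hX2.of_le ((hm.comp hXm).aestronglyMeasurable) ?_
    filter_upwards with a
    have := hb (X a) (hX0 a)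
    simp only [hYdef, Real.norm_eq_abs]
    rw [abs_of_nonneg this.1, abs_of_nonneg (hX0 a)]
    exact this.2
  have hZ2 : MemLp Z 2 P := hX2.sub hY2
  have key := variance_convex_combo_key P Y Z hY2 hZ2 ω
  have hYZ : (fun a => Y a + Z a) = X := funext fun a => by simp [hYdef, hZdef]
  rw [hYZ] at key
  rw [key]
  have hnn : 0 ≤ variance (fun a => ω * Y a - (1 - ω) * Z a) P := variance_nonneg _ _
  linarith
end

section
/- Let X be a nonnegative square-integrable random variable and ω ∈ [0,1]. For every measurable function h : ℝ → ℝ with 0 ≤ h(x) ≤ x for all x ≥ 0, one has ω·Var(h(X)) + (1−ω)·Var(X − h(X)) ≥ ω(1−ω)·Var(X). -/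
open MeasureTheory ProbabilityTheory

/-- For every measurable `h` with `0 ≤ h(x) ≤ x` for `x ≥ 0`,
`ω·Var(h(X)) + (1−ω)·Var(X − h(X)) ≥ ω(1−ω)·Var(X)`. -/
theorem convex_combination_of_variances_lower_bound
    {Ω : Type*} [MeasurableSpace Ω] (P : Measure Ω) [IsProbabilityMeasure P]
    (X : Ω → ℝ) (hXm : Measurable X) (hX0 : ∀ a, 0 ≤ X a)
    (hX2 : MemLp X 2 P)
    (ω : ℝ) (hω : ω ∈ Set.Icc (0 : ℝ) 1)
    (h : ℝ → ℝ) (hhm : Measurable h) (hh : ∀ x, 0 ≤ x → 0 ≤ h x ∧ h x ≤ x) :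
    ω * (1 - ω) * variance X P
      ≤ ω * variance (fun a => h (X a)) P
        + (1 - ω) * variance (fun a => X a - h (X a)) P := by
  set Y : Ω → ℝ := fun a => h (X a) with hYdef
  set Z : Ω → ℝ := fun a => X a - h (X a) with hZdef
  have hYm : AEStronglyMeasurable Y P := (hhm.comp hXm).aestronglyMeasurable
  have hY2 : MemLp Y 2 P := by
    refine MemLp.of_le hX2 hYm (Filter.Eventually.of_forall fun a => ?_)
    have := hh (X a) (hX0 a)
    simp only [Real.norm_eq_abs, hYdef]
    rw [abs_of_nonneg this.1, abs_of_nonneg (hX0 a)]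
    exact this.2
  have hZ2 : MemLp Z 2 P := hX2.sub hY2
  have hW2 : MemLp (fun a => ω * Y a - (1 - ω) * Z a) 2 P :=
    (hY2.const_mul ω).sub (hZ2.const_mul (1 - ω))
  -- integrability facts
  have iX : Integrable X P := hX2.integrable one_le_two
  have iY : Integrable Y P := hY2.integrable one_le_two
  have iZ : Integrable Z P := hZ2.integrable one_le_two
  have iX2 : Integrable (fun a => X a ^ 2) P := hX2.integrable_sq
  have iY2 : Integrable (fun a => Y a ^ 2) P := hY2.integrable_sq
  have iZ2 : Integrable (fun a => Z a ^ 2) P := hZ2.integrable_sq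
  have iYZ : Integrable (fun a => Y a * Z a) P := by
    have : (fun a => Y a * Z a)
        = fun a => (X a ^ 2 - Y a ^ 2 - Z a ^ 2) / 2 := by
      funext a
      have : X a = Y a + Z a := by simp [hYdef, hZdef]
      rw [this]; ring
    rw [this]
    exact ((iX2.sub iY2).sub iZ2).div_const 2
  -- expectations
  have vX : variance X P = ∫ a, X a ^ 2 ∂P - (∫ a, X a ∂P) ^ 2 := by
    rw [variance_eq_sub hX2]; rfl
  have vY : variance Y P = ∫ a, Y a ^ 2 ∂P - (∫ a, Y a ∂P) ^ 2 := by
    rw [variance_eq_sub hY2]; rfl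
  have vZ : variance Z P = ∫ a, Z a ^ 2 ∂P - (∫ a, Z a ∂P) ^ 2 := by
    rw [variance_eq_sub hZ2]; rfl
  have vW : variance (fun a => ω * Y a - (1 - ω) * Z a) P
      = ∫ a, (ω * Y a - (1 - ω) * Z a) ^ 2 ∂P
        - (∫ a, (ω * Y a - (1 - ω) * Z a) ∂P) ^ 2 := by
    rw [variance_eq_sub hW2]; rfl
  -- expand integrals
  have eX2 : ∫ a, X a ^ 2 ∂P
      = ∫ a, Y a ^ 2 ∂P + 2 * ∫ a, Y a * Z a ∂P + ∫ a, Z a ^ 2 ∂P := by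
    have : (fun a => X a ^ 2)
        = fun a => Y a ^ 2 + 2 * (Y a * Z a) + Z a ^ 2 := by
      funext a
      have : X a = Y a + Z a := by simp [hYdef, hZdef]
      rw [this]; ring
    have i1 : Integrable (fun a => Y a ^ 2 + 2 * (Y a * Z a)) P := iY2.add (iYZ.const_mul 2)
    rw [this, integral_add i1 iZ2, integral_add iY2 (iYZ.const_mul 2), integral_const_mul]
  have eX : ∫ a, X a ∂P = ∫ a, Y a ∂P + ∫ a, Z a ∂P := by
    have : X = fun a => Y a + Z a := by
      funext a; simp [hYdef, hZdef]
    rw [this, integral_add iY iZ]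
  have eW2 : ∫ a, (ω * Y a - (1 - ω) * Z a) ^ 2 ∂P
      = ω ^ 2 * ∫ a, Y a ^ 2 ∂P - 2 * (ω * (1 - ω)) * ∫ a, Y a * Z a ∂P
        + (1 - ω) ^ 2 * ∫ a, Z a ^ 2 ∂P := by
    have : (fun a => (ω * Y a - (1 - ω) * Z a) ^ 2)
        = fun a => ω ^ 2 * Y a ^ 2 - 2 * (ω * (1 - ω)) * (Y a * Z a)
            + (1 - ω) ^ 2 * Z a ^ 2 := by
      funext a; ring
    have i1 : Integrable (fun a => ω ^ 2 * Y a ^ 2 - 2 * (ω * (1 - ω)) * (Y a * Z a)) P :=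
      (iY2.const_mul _).sub (iYZ.const_mul _)
    have i2 : Integrable (fun a => (1 - ω) ^ 2 * Z a ^ 2) P := iZ2.const_mul _
    rw [this, integral_add i1 i2, integral_sub (iY2.const_mul _) (iYZ.const_mul _),
      integral_const_mul, integral_const_mul, integral_const_mul]
  have eW : ∫ a, (ω * Y a - (1 - ω) * Z a) ∂P
      = ω * ∫ a, Y a ∂P - (1 - ω) * ∫ a, Z a ∂P := by
    rw [integral_sub (iY.const_mul _) (iZ.const_mul _), integral_const_mul, integral_const_mul]
  -- key identity
  have key : ω * variance Y P + (1 - ω) * variance Z P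
      = ω * (1 - ω) * variance X P
        + variance (fun a => ω * Y a - (1 - ω) * Z a) P := by
    rw [vX, vY, vZ, vW, eX2, eX, eW2, eW]; ring
  have hWnn : 0 ≤ variance (fun a => ω * Y a - (1 - ω) * Z a) P :=
    variance_nonneg _ _
  linarith [key, hWnn]
end

section
/- Let ρ₁ and ρ₂ be translative and monotone risk measures on a probability space (Ω, ℱ, ℙ), let X be a nonnegative random variable, π ∈ ℝ, and for h in the class C of reinsurance contracts define J(h) = ω·ρ₁(X − h(X) + π) + (1−ω)·ρ₂(h(X) − π). Suppose f ∈ C minimizes J over C, and suppose g ∈ C and constants 0 < a_min ≤ a_max satisfy a_min ≤ f(X) − g(X) ≤ a_max ℙ-almost surely. If 0 ≤ ω ≤ a_min/(a_min + a_max), then J(g) = J(f); in particular g also minimizes J over C. -/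
open MeasureTheory ProbabilityTheory

/-- The class `C` of reinsurance contracts: `0 ≤ h(x) ≤ x` for `x ≥ 0`,
`h` is nondecreasing, and `x ↦ x − h(x)` is nondecreasing. -/
def IsReinsuranceContract (h : ℝ → ℝ) : Prop :=
  (∀ x, 0 ≤ x → 0 ≤ h x ∧ h x ≤ x) ∧ Monotone h ∧ Monotone (fun x => x - h x)

/-- If `f ∈ C` minimizes `J(h) = ω·ρ₁(X − h(X) + π) + (1−ω)·ρ₂(h(X) − π)` over `C`,
`g ∈ C` satisfies `a_min ≤ f(X) − g(X) ≤ a_max` a.s. with `0 < a_min ≤ a_max`, and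
`0 ≤ ω ≤ a_min/(a_min + a_max)`, then `J(g) = J(f)`; in particular `g` also minimizes
`J` over `C`. -/
theorem smaller_contract_also_minimizes_convex_combination
    {Ω : Type*} [MeasurableSpace Ω] (P : Measure Ω) [IsProbabilityMeasure P]
    (ρ₁ ρ₂ : (Ω → ℝ) → ℝ)
    (htrans₁ : ∀ (Y : Ω → ℝ) (c : ℝ), ρ₁ (fun a => Y a + c) = ρ₁ Y + c)
    (hmono₁ : ∀ Y Z : Ω → ℝ, (∀ᵐ a ∂P, Y a ≤ Z a) → ρ₁ Y ≤ ρ₁ Z)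
    (htrans₂ : ∀ (Y : Ω → ℝ) (c : ℝ), ρ₂ (fun a => Y a + c) = ρ₂ Y + c)
    (hmono₂ : ∀ Y Z : Ω → ℝ, (∀ᵐ a ∂P, Y a ≤ Z a) → ρ₂ Y ≤ ρ₂ Z)
    (X : Ω → ℝ) (hX0 : ∀ a, 0 ≤ X a) (π : ℝ) (ω : ℝ)
    (J : (ℝ → ℝ) → ℝ)
    (hJ : ∀ h : ℝ → ℝ, J h = ω * ρ₁ (fun a => X a - h (X a) + π)
        + (1 - ω) * ρ₂ (fun a => h (X a) - π))
    (f : ℝ → ℝ) (hf : IsReinsuranceContract f)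
    (hfmin : ∀ h : ℝ → ℝ, IsReinsuranceContract h → J f ≤ J h)
    (g : ℝ → ℝ) (hg : IsReinsuranceContract g)
    (aMin aMax : ℝ) (haMin : 0 < aMin) (haMinMax : aMin ≤ aMax)
    (hfg : ∀ᵐ a ∂P, aMin ≤ f (X a) - g (X a) ∧ f (X a) - g (X a) ≤ aMax)
    (hω0 : 0 ≤ ω) (hω1 : ω ≤ aMin / (aMin + aMax)) :
    J g = J f ∧ ∀ h : ℝ → ℝ, IsReinsuranceContract h → J g ≤ J h := by
  have h1 : ρ₁ (fun a => X a - g (X a) + π) ≤ ρ₁ (fun a => X a - f (X a) + π) + aMax := by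
    calc ρ₁ (fun a => X a - g (X a) + π)
        ≤ ρ₁ (fun a => (X a - f (X a) + π) + aMax) := by
          apply hmono₁
          filter_upwards [hfg] with a ⟨_, h2⟩
          linarith
      _ = ρ₁ (fun a => X a - f (X a) + π) + aMax := htrans₁ _ _
  have h2 : ρ₂ (fun a => g (X a) - π) ≤ ρ₂ (fun a => f (X a) - π) - aMin := by
    calc ρ₂ (fun a => g (X a) - π)
        ≤ ρ₂ (fun a => (f (X a) - π) + -aMin) := by
          apply hmono₂
          filter_upwards [hfg] with a ⟨h1, _⟩
          linarith
      _ = ρ₂ (fun a => f (X a) - π) + -aMin := htrans₂ _ _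
      _ = _ := by ring
  have hωa : ω * aMax ≤ (1 - ω) * aMin := by
    have hpos : 0 < aMin + aMax := by linarith
    rw [le_div_iff₀ hpos] at hω1
    nlinarith
  have hω1' : ω ≤ 1 := le_trans hω1 (by
    rw [div_le_one (by linarith)]; linarith)
  have hle : J g ≤ J f := by
    rw [hJ g, hJ f]
    nlinarith [mul_le_mul_of_nonneg_left h1 hω0,
      mul_le_mul_of_nonneg_left h2 (by linarith : (0:ℝ) ≤ 1 - ω)]
  have heq : J g = J f := le_antisymm hle (hfmin g hg)
  exact ⟨heq, fun h hh => heq ▸ hfmin h hh⟩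
end

section
/- Let f belong to the class C of reinsurance contracts and let M₁ > 0. Define g(x) = f(x) for x < M₁ and g(x) = x − M₁ + f(M₁) for x ≥ M₁. Then g belongs to C and f(x) ≤ g(x) for all x ≥ 0. -/
/-- For `f ∈ C` and `M₁ > 0`, the function `g(x) = f(x)` for `x < M₁` and
`g(x) = x − M₁ + f(M₁)` for `x ≥ M₁` belongs to `C` and dominates `f` on `[0,∞)`. -/
theorem layer_extension_in_contract_class_and_dominates
    (f : ℝ → ℝ) (hf : IsReinsuranceContract f) (M₁ : ℝ) (hM₁ : 0 < M₁)
    (g : ℝ → ℝ) (hg : ∀ x, g x = if x < M₁ then f x else x - M₁ + f M₁) :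
    IsReinsuranceContract g ∧ ∀ x, 0 ≤ x → f x ≤ g x := by
  obtain ⟨hfb, hfm, hfs⟩ := hf
  have hfM := hfb M₁ hM₁.le
  refine ⟨⟨?_, ?_, ?_⟩, ?_⟩
  · intro x hx
    rw [hg x]
    split_ifs with h
    · exact hfb x hx
    · push_neg at h
      constructor
      · linarith [hfM.1]
      · linarith [hfM.2]
  · intro a b hab
    rw [hg a, hg b]
    split_ifs with h1 h2 h2
    · exact hfm hab
    · push_neg at h2
      have := hfm h1.le
      linarith
    · linarith
    · linarith
  · intro a b hab
    simp only
    rw [hg a, hg b]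
    split_ifs with h1 h2 h2
    · exact hfs hab
    · have := hfs (le_of_lt h1) (a := a) (b := M₁)
      simp only at this
      linarith
    · linarith
    · linarith
  · intro x hx
    rw [hg x]
    split_ifs with h
    · exact le_refl _
    · push_neg at h
      have := hfs h (a := M₁) (b := x)
      simp only at this
      linarith
end

section
/- Let X be a nonnegative random variable on a probability space (Ω, ℱ, ℙ) and let g_k be the k-layer stop-loss policy with retention d and thresholds M₁, …, M_k (M₀ = 0). Then for every j ∈ {0, 1, …, k} and every real s with M_j − j·d ≤ s < M_{j+1} − (j+1)·d (where M_{k+1} is interpreted as +∞, so for j = k the condition is s ≥ M_k − k·d), the events {g_k(X) > s} and {X > s + (j+1)d} coincide; in particular ℙ(g_k(X) > s) = ℙ(X > s + (j+1)d). -/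
open MeasureTheory

lemma multiLayer_key (d : ℝ) (hd : 0 < d) (k : ℕ) (M : ℕ → ℝ) (hM0 : M 0 = 0)
    (hM : ∀ j < k, M j + d ≤ M (j + 1)) (j : ℕ) (hj : j ≤ k) (s : ℝ)
    (hs1 : M j - (j : ℝ) * d ≤ s) (hs2 : j < k → s < M (j + 1) - ((j : ℝ) + 1) * d)
    (x : ℝ) : s < multiLayer d M k x ↔ s + ((j : ℝ) + 1) * d < x := by
  have mono : ∀ i' ≤ k, ∀ i ≤ i', M i ≤ M i' := by
    intro i'
    induction i' with
    | zero => intro _ i hi; have h0 : i = 0 := Nat.le_zero.mp hi; rw [h0]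
    | succ n ih =>
      intro hn i hi
      by_cases hc : i = n + 1
      · subst hc; exact le_rfl
      · have hin : i ≤ n := by omega
        have h1 : M i ≤ M n := ih (by omega) i hin
        have h2 := hM n (by omega)
        linarith
  have e1 : ∀ n : ℕ, ∑ i ∈ Finset.range n, (M (i + 1) - M i - d) = M n - (n : ℝ) * d := by
    intro n
    have h1 : ∑ i ∈ Finset.range n, (M (i + 1) - M i - d)
        = (∑ i ∈ Finset.range n, (M (i + 1) - M i)) - (n : ℝ) * d := by
      rw [Finset.sum_sub_distrib, Finset.sum_const, Finset.card_range, nsmul_eq_mul]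
    rw [h1, Finset.sum_range_sub, hM0]; ring
  have hexp : ((j : ℝ) + 1) * d = (j : ℝ) * d + d := by ring
  have upper : ∀ y : ℝ, y ≤ s + ((j : ℝ) + 1) * d → multiLayer d M k y ≤ s := by
    intro y hy
    unfold multiLayer
    rcases eq_or_lt_of_le hj with hjk | hjk
    · subst hjk
      have hsum : ∑ i ∈ Finset.range j, max (min y (M (i + 1)) - M i - d) 0
          ≤ M j - (j : ℝ) * d := by
        rw [← e1 j]
        apply Finset.sum_le_sum
        intro i hi
        have h2 := hM i (Finset.mem_range.mp hi)
        have h3 := min_le_right y (M (i + 1))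
        exact max_le (by linarith) (by linarith)
      have hmax : max (y - M j - d) 0 ≤ s - (M j - (j : ℝ) * d) :=
        max_le (by linarith) (by linarith)
      linarith
    · have hxM : y < M (j + 1) := by
        have := hs2 hjk
        linarith
      have hzero : ∀ i ∈ Finset.range k, i ∉ Finset.range (j + 1) →
          max (min y (M (i + 1)) - M i - d) 0 = 0 := by
        intro i hi hni
        simp only [Finset.mem_range] at hi hni
        have hji : j + 1 ≤ i := by omega
        have h1 : M (j + 1) ≤ M i := mono i (le_of_lt hi) (j + 1) hji
        have h3 := min_le_left y (M (i + 1))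
        exact max_eq_right (by linarith)
      rw [← Finset.sum_subset (Finset.range_subset_range.mpr (by omega : j + 1 ≤ k)) hzero]
      rw [Finset.sum_range_succ]
      have hsum : ∑ i ∈ Finset.range j, max (min y (M (i + 1)) - M i - d) 0
          ≤ M j - (j : ℝ) * d := by
        rw [← e1 j]
        apply Finset.sum_le_sum
        intro i hi
        have h2 := hM i (lt_of_lt_of_le (Finset.mem_range.mp hi) hj)
        have h3 := min_le_right y (M (i + 1))
        exact max_le (by linarith) (by linarith)
      have htj : max (min y (M (j + 1)) - M j - d) 0 ≤ s - (M j - (j : ℝ) * d) := by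
        have h3 := min_le_left y (M (j + 1))
        exact max_le (by linarith) (by linarith)
      have hlast : max (y - M k - d) 0 = 0 := by
        have h1 : M (j + 1) ≤ M k := mono k le_rfl (j + 1) hjk
        exact max_eq_right (by linarith)
      rw [hlast]; linarith
  have lower : ∀ y : ℝ, s + ((j : ℝ) + 1) * d < y → s < multiLayer d M k y := by
    intro y hy
    unfold multiLayer
    have hsumlo : ∀ n ≤ j, M n - (n : ℝ) * d
        ≤ ∑ i ∈ Finset.range n, max (min y (M (i + 1)) - M i - d) 0 := by
      intro n hn
      rw [← e1 n]
      apply Finset.sum_le_sum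
      intro i hi
      have hi' : i < n := Finset.mem_range.mp hi
      have hMy : M (i + 1) ≤ y := by
        have h1 : M (i + 1) ≤ M j := mono j hj (i + 1) (by omega)
        linarith
      rw [min_eq_right hMy]
      exact le_max_left _ _
    rcases eq_or_lt_of_le hj with hjk | hjk
    · subst hjk
      have h1 := hsumlo j le_rfl
      have h2 : y - M j - d ≤ max (y - M j - d) 0 := le_max_left _ _
      linarith
    · have hsub : ∑ i ∈ Finset.range (j + 1), max (min y (M (i + 1)) - M i - d) 0
          ≤ ∑ i ∈ Finset.range k, max (min y (M (i + 1)) - M i - d) 0 :=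
        Finset.sum_le_sum_of_subset_of_nonneg (Finset.range_subset_range.mpr (by omega))
          (fun i _ _ => le_max_right _ _)
      have h1 := hsumlo j le_rfl
      rw [Finset.sum_range_succ] at hsub
      have hminy : s + ((j : ℝ) + 1) * d < min y (M (j + 1)) :=
        lt_min hy (by have := hs2 hjk; linarith)
      have htj : min y (M (j + 1)) - M j - d ≤ max (min y (M (j + 1)) - M j - d) 0 :=
        le_max_left _ _
      have hlast : (0 : ℝ) ≤ max (y - M k - d) 0 := le_max_right _ _
      linarith
  constructor
  · intro h
    by_contra hx
    push_neg at hx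
    exact absurd h (not_lt.mpr (upper x hx))
  · exact lower x

/-- For `j ∈ {0,…,k}` and `M_j − j·d ≤ s < M_{j+1} − (j+1)·d` (with `M_{k+1} = +∞`),
the events `{g_k(X) > s}` and `{X > s + (j+1)d}` coincide; in particular their
probabilities are equal. -/
theorem multiLayer_tail_event
    {Ω : Type*} [MeasurableSpace Ω] (P : Measure Ω) [IsProbabilityMeasure P]
    (X : Ω → ℝ) (hXm : Measurable X) (hX0 : ∀ a, 0 ≤ X a)
    (d : ℝ) (hd : 0 < d) (k : ℕ) (hk : 1 ≤ k)
    (M : ℕ → ℝ) (hM0 : M 0 = 0) (hM : ∀ j < k, M j + d ≤ M (j + 1))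
    (j : ℕ) (hj : j ≤ k) (s : ℝ)
    (hs1 : M j - (j : ℝ) * d ≤ s)
    (hs2 : j < k → s < M (j + 1) - ((j : ℝ) + 1) * d) :
    {a | s < multiLayer d M k (X a)} = {a | s + ((j : ℝ) + 1) * d < X a}
      ∧ P {a | s < multiLayer d M k (X a)} = P {a | s + ((j : ℝ) + 1) * d < X a} := by
  have hset : {a | s < multiLayer d M k (X a)} = {a | s + ((j : ℝ) + 1) * d < X a} := by
    ext a
    simp only [Set.mem_setOf_eq]
    exact multiLayer_key d hd k M hM0 hM j hj s hs1 hs2 (X a)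
  exact ⟨hset, by rw [hset]⟩
end

section
/- Let X be a nonnegative random variable on a probability space (Ω, ℱ, ℙ) and let g_k be the k-layer stop-loss policy with retention d and thresholds M₁, …, M_k (M₀ = 0). Then the insurer's retained risk satisfies: (i) X − g_k(X) ≤ (k+1)d everywhere, and (ii) for every j ∈ {0, 1, …, k} and every real s with j·d ≤ s < (j+1)·d, the events {X − g_k(X) > s} and {X > M_j + s − j·d} coincide; in particular ℙ(X − g_k(X) > s) = ℙ(X > M_j + s − j·d). -/
open MeasureTheory

/-- The insurer's retained risk under the k-layer stop-loss policy is bounded by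
`(k+1)d`, and for `j ∈ {0,…,k}` and `j·d ≤ s < (j+1)·d` the events
`{X − g_k(X) > s}` and `{X > M_j + s − j·d}` coincide; in particular their
probabilities are equal. -/
theorem multiLayer_retained_bound_and_tail_event
    {Ω : Type*} [MeasurableSpace Ω] (P : Measure Ω) [IsProbabilityMeasure P]
    (X : Ω → ℝ) (hXm : Measurable X) (hX0 : ∀ a, 0 ≤ X a)
    (d : ℝ) (hd : 0 < d) (k : ℕ) (hk : 1 ≤ k)
    (M : ℕ → ℝ) (hM0 : M 0 = 0) (hM : ∀ j < k, M j + d ≤ M (j + 1)) :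
    (∀ a, X a - multiLayer d M k (X a) ≤ ((k : ℝ) + 1) * d)
      ∧ ∀ j ≤ k, ∀ s : ℝ, (j : ℝ) * d ≤ s → s < ((j : ℝ) + 1) * d →
          {a | s < X a - multiLayer d M k (X a)} = {a | M j + s - (j : ℝ) * d < X a}
            ∧ P {a | s < X a - multiLayer d M k (X a)}
              = P {a | M j + s - (j : ℝ) * d < X a} := by
  -- gap lemma : for i < j ≤ k, M i + d ≤ M j
  have hgap : ∀ j ≤ k, ∀ i < j, M i + d ≤ M j := by
    intro j
    induction j with
    | zero => intro _ i hi; omega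
    | succ n ih =>
      intro hn i hi
      rcases Nat.lt_succ_iff_lt_or_eq.mp hi with hi' | rfl
      · have h1 := ih (by omega) i hi'
        have h2 := hM n (by omega)
        linarith
      · exact hM i (by omega)
  -- key identity
  have key : ∀ x : ℝ, 0 ≤ x →
      x - multiLayer d M k x = ∑ j ∈ Finset.range (k + 1), min (max (x - M j) 0) d := by
    intro x hx
    have hterm1 : ∀ j < k, max (min x (M (j + 1)) - M j - d) 0
        = min x (M (j + 1)) - min x (M j + d) := by
      intro j hj
      have hj' := hM j hj
      rcases le_total x (M j + d) with h1 | h1 <;> rcases le_total x (M (j + 1)) with h2 | h2 <;>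
        rw [min_def, min_def, max_def] <;> split_ifs <;> linarith
    have hterm2 : max (x - M k - d) 0 = x - min x (M k + d) := by
      rcases le_total x (M k + d) with h1 | h1 <;> rw [min_def, max_def] <;> split_ifs <;> linarith
    have hterm3 : ∀ j : ℕ, min (max (x - M j) 0) d
        = min x (M j + d) - min x (M j) := by
      intro j
      rcases le_total x (M j) with h1 | h1 <;> rcases le_total x (M j + d) with h2 | h2 <;>
        rw [min_def, min_def, min_def, max_def] <;> split_ifs <;> linarith
    have e1 : multiLayer d M k x
        = (∑ j ∈ Finset.range k, (min x (M (j + 1)) - min x (M j + d)))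
          + (x - min x (M k + d)) := by
      unfold multiLayer
      rw [hterm2]
      congr 1
      exact Finset.sum_congr rfl fun j hj => hterm1 j (Finset.mem_range.mp hj)
    rw [e1]
    rw [Finset.sum_congr rfl fun j (hj : j ∈ Finset.range (k+1)) => hterm3 j]
    rw [Finset.sum_sub_distrib, Finset.sum_sub_distrib,
      Finset.sum_range_succ (fun j => min x (M j + d)),
      Finset.sum_range_succ' (fun j => min x (M j))]
    have h0 : min x (M 0) = 0 := by rw [hM0]; exact min_eq_right hx
    rw [h0]
    ring
  constructor
  · intro a
    rw [key (X a) (hX0 a)]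
    have hle : ∑ j ∈ Finset.range (k + 1), min (max (X a - M j) 0) d
        ≤ ∑ j ∈ Finset.range (k + 1), d :=
      Finset.sum_le_sum fun j _ => min_le_right _ _
    rw [Finset.sum_const, Finset.card_range, nsmul_eq_mul] at hle
    push_cast at hle ⊢
    linarith
  · intro j hj s hs1 hs2
    have hset : {a | s < X a - multiLayer d M k (X a)} = {a | M j + s - (j : ℝ) * d < X a} := by
      ext a
      simp only [Set.mem_setOf_eq]
      rw [key (X a) (hX0 a)]
      set x := X a with hxdef
      set t := M j + s - (j : ℝ) * d with ht
      constructor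
      · -- contrapositive : x ≤ t → sum ≤ s
        intro hsum
        by_contra hxt
        push_neg at hxt
        -- split the sum
        have hsplit : ∑ i ∈ Finset.range (k + 1), min (max (x - M i) 0) d
            = (∑ i ∈ Finset.range j, min (max (x - M i) 0) d) + min (max (x - M j) 0) d
              + ∑ i ∈ Finset.Ico (j + 1) (k + 1), min (max (x - M i) 0) d := by
          rw [Finset.range_eq_Ico,
            ← Finset.sum_Ico_consecutive _ (Nat.zero_le (j + 1)) (by omega : j + 1 ≤ k + 1),
            ← Finset.range_eq_Ico, Finset.sum_range_succ]
        have h1 : ∑ i ∈ Finset.range j, min (max (x - M i) 0) d ≤ (j : ℝ) * d := by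
          have := Finset.sum_le_sum (f := fun i : ℕ => min (max (x - M i) 0) d)
            (g := fun _ => d) (s := Finset.range j) (fun i _ => min_le_right _ _)
          rw [Finset.sum_const, Finset.card_range, nsmul_eq_mul] at this
          exact this
        have h2 : min (max (x - M j) 0) d ≤ s - (j : ℝ) * d := by
          have : max (x - M j) 0 ≤ s - (j : ℝ) * d := by
            rw [max_def]; split_ifs <;> linarith
          exact le_trans (min_le_left _ _) this
        have h3 : ∑ i ∈ Finset.Ico (j + 1) (k + 1), min (max (x - M i) 0) d = 0 := by
          refine Finset.sum_eq_zero fun i hi => ?_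
          rw [Finset.mem_Ico] at hi
          have hMi : M j + d ≤ M i := hgap i (by omega) j (by omega)
          have : max (x - M i) 0 = 0 := max_eq_right (by linarith)
          rw [this]
          exact min_eq_left hd.le
        rw [hsplit, h3] at hsum
        linarith
      · intro hxt
        have hsub : ∑ i ∈ Finset.range (j + 1), min (max (x - M i) 0) d
            ≤ ∑ i ∈ Finset.range (k + 1), min (max (x - M i) 0) d := by
          refine Finset.sum_le_sum_of_subset_of_nonneg ?_ fun i _ _ => ?_
          · exact Finset.range_subset_range.mpr (by omega)
          · exact le_min (le_max_right _ _) hd.le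
        rw [Finset.sum_range_succ] at hsub
        have h1 : ∑ i ∈ Finset.range j, min (max (x - M i) 0) d = (j : ℝ) * d := by
          have : ∀ i ∈ Finset.range j, min (max (x - M i) 0) d = d := by
            intro i hi
            rw [Finset.mem_range] at hi
            have hMi : M i + d ≤ M j := hgap j hj i hi
            have hMj : M j ≤ t := by rw [ht]; nlinarith [hs1]
            have : d ≤ x - M i := by linarith
            rw [max_eq_left (by linarith), min_eq_right this]
          rw [Finset.sum_congr rfl this, Finset.sum_const, Finset.card_range, nsmul_eq_mul]
        have h2 : s - (j : ℝ) * d < min (max (x - M j) 0) d := by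
          have hMj : M j ≤ t := by rw [ht]; linarith
          have ha : s - (j : ℝ) * d < x - M j := by rw [ht] at hxt; linarith
          have hb : s - (j : ℝ) * d < d := by linarith
          exact lt_min (lt_of_lt_of_le ha (le_max_left _ _)) hb
        linarith
    exact ⟨hset, by rw [hset]⟩
end

section
/- Let d > 0 and let M₁ < M₂ < ⋯ < M_k satisfy M₁ ≥ d and M_j + d ≤ M_{j+1} for 1 ≤ j ≤ k−1; set M₀ = 0. Define recursively f₀(x) = (x − d)_+ and, for 1 ≤ j ≤ k, f_j(x) = f_{j−1}(x) if x < M_j and f_j(x) = f_{j−1}(M_j) + (x − M_j − d)_+ if x ≥ M_j. Then for all x ∈ ℝ, f_k(x) = Σ_{j=0}^{k−1} (min(x, M_{j+1}) − M_j − d)_+ + (x − M_k − d)_+; that is, the recursively constructed multi-layer policy of the extension algorithm coincides with the closed-form k-layer stop-loss policy. -/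
/-- The recursively constructed multi-layer policy of the layer-extension algorithm,
`f₀(x) = (x − d)_+` and `f_j(x) = f_{j−1}(x)` for `x < M_j`,
`f_j(x) = f_{j−1}(M_j) + (x − M_j − d)_+` for `x ≥ M_j`, coincides with the
closed-form k-layer stop-loss policy
`g_k(x) = Σ_{j=0}^{k−1} (min(x, M_{j+1}) − M_j − d)_+ + (x − M_k − d)_+`. -/
theorem recursive_layers_eq_closed_form
    (d : ℝ) (hd : 0 < d) (k : ℕ) (hk : 1 ≤ k)
    (M : ℕ → ℝ) (hM0 : M 0 = 0) (hM : ∀ j < k, M j + d ≤ M (j + 1))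
    (f : ℕ → ℝ → ℝ)
    (hf0 : ∀ x, f 0 x = max (x - d) 0)
    (hfsucc : ∀ j < k, ∀ x : ℝ,
      f (j + 1) x = if x < M (j + 1) then f j x
        else f j (M (j + 1)) + max (x - M (j + 1) - d) 0) :
    ∀ x : ℝ, f k x
      = (∑ j ∈ Finset.range k, max (min x (M (j + 1)) - M j - d) 0)
        + max (x - M k - d) 0 := by
  have hmono : ∀ j, j ≤ k → ∀ i, i ≤ j → M i ≤ M j := by
    intro j
    induction j with
    | zero => intro _ i hi; interval_cases i; exact le_rfl
    | succ n ih =>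
      intro hj i hi
      rcases Nat.lt_succ_iff_lt_or_eq.mp (Nat.lt_succ_of_le hi) with h | h
      · have h1 : M i ≤ M n := ih (by omega) i (by omega)
        have h2 : M n + d ≤ M (n + 1) := hM n (by omega)
        linarith
      · exact le_of_eq (congrArg M h)
  suffices h : ∀ n, n ≤ k → ∀ x, f n x
      = (∑ j ∈ Finset.range n, max (min x (M (j + 1)) - M j - d) 0)
        + max (x - M n - d) 0 from fun x => h k le_rfl x
  intro n
  induction n with
  | zero => intro _ x; simp [hf0, hM0]
  | succ n ih =>
    intro hn x
    have hn' : n < k := hn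
    rw [hfsucc n hn' x, Finset.sum_range_succ]
    by_cases hx : x < M (n + 1)
    · rw [if_pos hx, ih (le_of_lt hn') x]
      have h1 : min x (M (n + 1)) = x := min_eq_left hx.le
      have h2 : max (x - M (n + 1) - d) 0 = 0 :=
        max_eq_right (by linarith)
      rw [h1, h2]; ring
    · rw [if_neg hx, ih (le_of_lt hn') (M (n + 1))]
      push_neg at hx
      have hsum : ∀ j ∈ Finset.range n,
          max (min (M (n + 1)) (M (j + 1)) - M j - d) 0
            = max (min x (M (j + 1)) - M j - d) 0 := by
        intro j hj
        have hj' := Finset.mem_range.mp hj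
        have hle : M (j + 1) ≤ M (n + 1) := hmono (n + 1) (by omega) (j + 1) (by omega)
        rw [min_eq_right hle, min_eq_right (le_trans hle hx)]
      rw [Finset.sum_congr rfl hsum, min_eq_right hx]
end
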